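/- arXiv:2602.16289 — 5 statements merged into one kernel-verified Lean document; each statement's English description precedes it below -/
import Mathlib

section
/- Let (G, ≻) be a matching instance in which preferences are strict rankings, and let ℳ = {M₁, M₂} be a Pareto-optimal set of two matchings in G. Then ℳ is popular; moreover, either ℳ is strongly popular, or there exists a top-choice matching in G. -/
open scoped Classical

/-- A matching in a bipartite graph with agent set `A`, object set `O` and adjacency
relation `adj`, represented by the partial assignment `M : A → Option O` of objects to
agents: matched pairs are edges, and each object is matched to at most one agent. -/
def IsMatching {A O : Type*} (adj : A → O → Prop) (M : A → Option O) : Prop :=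
  (∀ a o, M a = some o → adj a o) ∧
  (∀ a a' o, M a = some o → M a' = some o → a = a')

/-- The lifted strict preference of agent `a` over matchings: `M ≻ₐ N` iff
`M(a) ≻ₐ N(a)`, where any assigned object is preferred to being unmatched. -/
def PrefM {A O : Type*} (pref : A → O → O → Prop) (a : A) (M N : A → Option O) : Prop :=
  (∃ o o', M a = some o ∧ N a = some o' ∧ pref a o o') ∨
  (∃ o, M a = some o ∧ N a = none)

/-- `pref a` is a strict partial order on the objects adjacent to `a`. -/
def IsPrefOrder {A O : Type*} (adj : A → O → Prop) (pref : A → O → O → Prop) : Prop :=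
  ∀ a : A, (∀ o, ¬ pref a o o) ∧
    (∀ o o' o'', pref a o o' → pref a o' o'' → pref a o o'') ∧
    (∀ o o', pref a o o' → adj a o ∧ adj a o')

/-- Preferences are strict rankings: each `pref a` is a strict linear order on the
objects adjacent to `a`. -/
def IsStrictRanking {A O : Type*} (adj : A → O → Prop) (pref : A → O → O → Prop) : Prop :=
  IsPrefOrder adj pref ∧
  ∀ a o o', adj a o → adj a o' → o ≠ o' → pref a o o' ∨ pref a o' o

/-- `φ(ℳ, N)`: the number of agents preferring some member of `ℳ` to `N`. -/
noncomputable def phiSet {A O : Type*} (pref : A → O → O → Prop)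
    (Mset : Set (A → Option O)) (N : A → Option O) : ℕ :=
  {a : A | ∃ M ∈ Mset, PrefM pref a M N}.ncard

/-- `φ(N, ℳ)`: the number of agents preferring `N` to every member of `ℳ`. -/
noncomputable def phiOne {A O : Type*} (pref : A → O → O → Prop)
    (N : A → Option O) (Mset : Set (A → Option O)) : ℕ :=
  {a : A | ∀ M ∈ Mset, PrefM pref a N M}.ncard

/-- `Mset` is popular (weakly Condorcet-winning) among the feasible matchings `F`:
`μ(ℳ, N) ≥ 0`, i.e. `φ(N, ℳ) ≤ φ(ℳ, N)`, for every feasible `N`. -/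
def Popular {A O : Type*} (pref : A → O → O → Prop) (F : Set (A → Option O))
    (Mset : Set (A → Option O)) : Prop :=
  ∀ N ∈ F, phiOne pref N Mset ≤ phiSet pref Mset N

/-- `Mset` is strongly popular (Condorcet-winning) among the feasible matchings `F`:
`μ(ℳ, N) > 0` for every feasible `N ∉ ℳ`. -/
def StronglyPopular {A O : Type*} (pref : A → O → O → Prop) (F : Set (A → Option O))
    (Mset : Set (A → Option O)) : Prop :=
  ∀ N ∈ F, N ∉ Mset → phiOne pref N Mset < phiSet pref Mset N

/-- A set `Y` of matchings Pareto-dominates a set `Z`. -/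
def Dominates {A O : Type*} (pref : A → O → O → Prop)
    (Y Z : Set (A → Option O)) : Prop :=
  Y.ncard ≤ Z.ncard ∧
  (∀ a : A, ∃ MY ∈ Y, ∀ MZ ∈ Z, ¬ PrefM pref a MZ MY) ∧
  (∃ a : A, ∃ MY ∈ Y, ∀ MZ ∈ Z, PrefM pref a MY MZ)

/-- `Mset` is Pareto-optimal: no set of feasible matchings Pareto-dominates it. -/
def ParetoOptimal {A O : Type*} (pref : A → O → O → Prop) (F : Set (A → Option O))
    (Mset : Set (A → Option O)) : Prop :=
  ¬ ∃ Y : Set (A → Option O), Y ⊆ F ∧ Dominates pref Y Mset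

/-- `M` is a top-choice matching among the feasible matchings `F`: no agent strictly
prefers any feasible matching to `M`. -/
def IsTopChoice {A O : Type*} (pref : A → O → O → Prop) (F : Set (A → Option O))
    (M : A → Option O) : Prop :=
  M ∈ F ∧ ∀ a : A, ¬ ∃ N ∈ F, PrefM pref a N M

/-!
Write `B` for the assignment giving every agent the better of its objects in `M₁` and `M₂`.
With strict rankings, `φ({M₁, M₂}, N)` and `φ(N, {M₁, M₂})` count the agents for whom `B`
beats `N`, resp. `N` beats `B`. Every object is held by at most two agents in `B`, and any
such capacity-two assignment splits into two matchings; so Pareto-optimality of `{M₁, M₂}`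
says that no capacity-two assignment weakly improving on `B` is strictly better for anyone.
Hence every object that an agent prefers to its `B`-object is held by two other agents in `B`.

For a matching `N`, each agent preferring `N` to `B` therefore points to two agents holding
its `N`-object in `B`, and these agents fare differently in `N` and `B`; double counting gives
`φ(N, {M₁, M₂}) ≤ φ({M₁, M₂}, N)`. In case of equality every agent preferring `N` has its
`B`-object wanted by another such agent; following these pointers gives a set of agents that
could all switch to `N` at once, contradicting Pareto-optimality, unless `N = B`. Then `B` is a
matching, and by the above nobody can be better off in another matching.
-/

section

open Finset

variable {A O : Type*} {adj : A → O → Prop} {pref : A → O → O → Prop}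

theorem Finset.exists_nonempty_subset_forall_exists_rel {α : Type*} {R : α → α → Prop}
    (S : Finset α) (hS : S.Nonempty) (h : ∀ c ∈ S, ∃ a ∈ S, R c a) :
    ∃ Z ⊆ S, Z.Nonempty ∧ ∀ a ∈ Z, ∃ c ∈ Z, R c a := by
  induction S using Finset.strongInduction with
  | H S ih =>
    -- Pass to the elements of `S` that have a predecessor in `S`; they still have successors.
    set S' := S.filter fun a => ∃ c ∈ S, R c a
    have hsucc : ∀ c ∈ S, ∃ a ∈ S', R c a := fun c hc =>
      let ⟨a, ha, hca⟩ := h c hc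
      ⟨a, mem_filter.2 ⟨ha, c, hc, hca⟩, hca⟩
    by_cases hS' : S' = S
    · exact ⟨S, subset_rfl, hS, fun a ha => (mem_filter.1 (show a ∈ S' by rwa [hS'])).2⟩
    · obtain ⟨c, hc⟩ := hS
      obtain ⟨a, ha, -⟩ := hsucc c hc
      obtain ⟨Z, hZ, hZne, hpred⟩ := ih S' (ssubset_iff_subset_ne.2 ⟨filter_subset _ _, hS'⟩)
        ⟨a, ha⟩ fun c hc => hsucc c (filter_subset _ _ hc)
      exact ⟨Z, hZ.trans (filter_subset _ _), hZne, hpred⟩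

section Preference

variable {a : A} {L M N M' N' : A → Option O}

theorem prefM_congr (hM : M a = M' a) (hN : N a = N' a) :
    PrefM pref a M N ↔ PrefM pref a M' N' := by
  unfold PrefM; rw [hM, hN]

theorem prefM_irrefl (hpref : IsPrefOrder adj pref) (a : A) (M : A → Option O) :
    ¬ PrefM pref a M M := by
  rintro (⟨o, o', h, h', hp⟩ | ⟨o, h, h'⟩)
  · obtain rfl : o = o' := Option.some_injective _ (h.symm.trans h')
    exact (hpref a).1 o hp
  · simp [h] at h'

theorem prefM_trans (hpref : IsPrefOrder adj pref) (hLM : PrefM pref a L M)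
    (hMN : PrefM pref a M N) : PrefM pref a L N := by
  rcases hLM with ⟨o, o', hL, hM, hp⟩ | ⟨o, hL, hM⟩
  · rcases hMN with ⟨u, u', hM', hN, hq⟩ | ⟨u, hM', hN⟩
    · obtain rfl : o' = u := Option.some_injective _ (hM.symm.trans hM')
      exact Or.inl ⟨o, u', hL, hN, (hpref a).2.1 _ _ _ hp hq⟩
    · exact Or.inr ⟨o, hL, hN⟩
  · rcases hMN with ⟨u, u', hM', -, -⟩ | ⟨u, hM', -⟩ <;> simp [hM] at hM'

theorem prefM_asymm (hpref : IsPrefOrder adj pref) (hMN : PrefM pref a M N) :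
    ¬ PrefM pref a N M :=
  fun hNM => prefM_irrefl hpref a M (prefM_trans hpref hMN hNM)

theorem prefM_trichotomous (hpref : IsStrictRanking adj pref)
    (hM : ∀ o, M a = some o → adj a o) (hN : ∀ o, N a = some o → adj a o) :
    PrefM pref a M N ∨ M a = N a ∨ PrefM pref a N M := by
  unfold PrefM
  rcases hMa : M a with _ | o <;> rcases hNa : N a with _ | o'
  · simp
  · simp
  · simp
  · by_cases ho : o = o'
    · simp [ho]
    · rcases hpref.2 a o o' (hM o hMa) (hN o' hNa) ho with h | h <;> simp [h]

end Preference

def IsTwoMatching (adj : A → O → Prop) (C : A → Option O) : Prop :=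
  (∀ a o, C a = some o → adj a o) ∧ ∀ o, {a | C a = some o}.ncard ≤ 2

theorem IsMatching.ncard_le_one [Finite A] {M : A → Option O} (hM : IsMatching adj M) (o : O) :
    {a | M a = some o}.ncard ≤ 1 :=
  (Set.ncard_le_one (Set.toFinite _)).2 fun _ ha _ hb => hM.2 _ _ o ha hb

theorem IsTwoMatching.exists_cover [Finite A] {C : A → Option O} (hC : IsTwoMatching adj C) :
    ∃ Y₁ Y₂, IsMatching adj Y₁ ∧ IsMatching adj Y₂ ∧ ∀ a, Y₁ a = C a ∨ Y₂ a = C a := by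
  rcases isEmpty_or_nonempty A with hA | hA
  · exact ⟨C, C, ⟨isEmptyElim, isEmptyElim⟩, ⟨isEmptyElim, isEmptyElim⟩, isEmptyElim⟩
  -- `Y₁` gives each object to a chosen representative among its (at most two) users,
  -- `Y₂` gives it to the other one.
  set rep : A → A := fun a => Function.invFun C (C a)
  have hrep : ∀ a, C (rep a) = C a := fun a => Function.invFun_eq ⟨a, rfl⟩
  refine ⟨fun a => if rep a = a then C a else none, fun a => if rep a = a then none else C a,
    ⟨?_, ?_⟩, ⟨?_, ?_⟩, fun a => by by_cases h : rep a = a <;> simp [h]⟩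
  · intro a o h
    dsimp only at h
    split_ifs at h
    exact hC.1 a o h
  · intro a a' o h h'
    dsimp only at h h'
    split_ifs at h h' with ha ha'
    rw [← ha, ← ha', show rep a = rep a' from congrArg (Function.invFun C) (h.trans h'.symm)]
  · intro a o h
    dsimp only at h
    split_ifs at h
    exact hC.1 a o h
  · intro a a' o h h'
    dsimp only at h h'
    split_ifs at h h' with ha ha'
    by_contra hne
    have hsub : ({rep a, a, a'} : Set A) ⊆ {c | C c = some o} := by
      rintro c (rfl | rfl | rfl)
      exacts [(hrep a).trans h, h, h']
    have hrep' : rep a' = rep a := congrArg (Function.invFun C) (h'.trans h.symm)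
    have := (Set.ncard_le_ncard hsub (Set.toFinite _)).trans (hC.2 o)
    rw [Set.ncard_eq_three.2 ⟨rep a, a, a', ha, hrep' ▸ ha', hne, rfl⟩] at this
    omega

theorem not_paretoOptimal_of_isTwoMatching [Finite A] {Z : Set (A → Option O)}
    (hZ : 2 ≤ Z.ncard) {C : A → Option O} (hC : IsTwoMatching adj C)
    (hweak : ∀ a, ∀ M ∈ Z, ¬ PrefM pref a M C) (hstrict : ∃ a, ∀ M ∈ Z, PrefM pref a C M) :
    ¬ ParetoOptimal pref {M | IsMatching adj M} Z := by
  obtain ⟨Y₁, Y₂, hY₁, hY₂, hcover⟩ := hC.exists_cover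
  have hY : ∀ a, ∃ Y ∈ ({Y₁, Y₂} : Set (A → Option O)), Y a = C a := fun a =>
    (hcover a).elim (fun h => ⟨Y₁, by simp, h⟩) fun h => ⟨Y₂, by simp, h⟩
  refine not_not_intro ⟨{Y₁, Y₂}, ?_, ?_, fun a => ?_, ?_⟩
  · rintro Y (rfl | rfl | rfl) <;> assumption
  · exact (Set.ncard_insert_le _ _).trans (by simpa using hZ)
  · obtain ⟨Y, hY, hYa⟩ := hY a
    exact ⟨Y, hY, fun M hM => (prefM_congr rfl hYa).not.2 (hweak a M hM)⟩
  · obtain ⟨a, ha⟩ := hstrict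
    obtain ⟨Y, hY, hYa⟩ := hY a
    exact ⟨a, Y, hY, fun M hM => (prefM_congr hYa rfl).2 (ha M hM)⟩

theorem IsTwoMatching.piecewise [Finite A] {B N : A → Option O} (hB : IsTwoMatching adj B)
    (hN : IsMatching adj N) {Z : Set A}
    (hZ : ∀ a ∈ Z, ∀ o, N a = some o → {c | c ∉ Z ∧ B c = some o}.ncard ≤ 1) :
    IsTwoMatching adj (Z.piecewise N B) := by
  refine ⟨fun a o h => ?_, fun o => ?_⟩
  · by_cases ha : a ∈ Z
    · exact hN.1 a o (by simpa [ha] using h)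
    · exact hB.1 a o (by simpa [ha] using h)
  by_cases ho : ∃ a ∈ Z, N a = some o
  · obtain ⟨a, ha, hNa⟩ := ho
    have hsub : {c | Z.piecewise N B c = some o} ⊆ insert a {c | c ∉ Z ∧ B c = some o} := by
      intro c hc
      by_cases hcZ : c ∈ Z
      · exact Or.inl (hN.2 c a o (by simpa [hcZ] using hc) hNa)
      · exact Or.inr ⟨hcZ, by simpa [hcZ] using hc⟩
    calc _ ≤ _ := Set.ncard_le_ncard hsub (Set.toFinite _)
      _ ≤ _ := Set.ncard_insert_le _ _
      _ ≤ 2 := by have := hZ a ha o hNa; omega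
  · have hsub : {c | Z.piecewise N B c = some o} ⊆ {c | B c = some o} := by
      intro c hc
      by_cases hcZ : c ∈ Z
      · exact absurd ⟨c, hcZ, by simpa [hcZ] using hc⟩ ho
      · simpa [hcZ] using hc
    exact (Set.ncard_le_ncard hsub (Set.toFinite _)).trans (hB.2 o)

noncomputable def bestOf (pref : A → O → O → Prop) (M₁ M₂ : A → Option O) : A → Option O :=
  fun a => if PrefM pref a M₂ M₁ then M₂ a else M₁ a

section BestOf

variable {M₁ M₂ : A → Option O}

theorem bestOf_eq_or (a : A) : bestOf pref M₁ M₂ a = M₁ a ∨ bestOf pref M₁ M₂ a = M₂ a := by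
  unfold bestOf; split_ifs <;> simp

theorem isTwoMatching_bestOf [Finite A] (hM₁ : IsMatching adj M₁) (hM₂ : IsMatching adj M₂) :
    IsTwoMatching adj (bestOf pref M₁ M₂) := by
  refine ⟨fun a o h => (bestOf_eq_or a).elim (fun e => hM₁.1 a o (e.symm.trans h))
    fun e => hM₂.1 a o (e.symm.trans h), fun o => ?_⟩
  have hsub : {a | bestOf pref M₁ M₂ a = some o} ⊆ {a | M₁ a = some o} ∪ {a | M₂ a = some o} :=
    fun a h => (bestOf_eq_or a).elim (fun e => Or.inl (e.symm.trans h))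
      fun e => Or.inr (e.symm.trans h)
  calc _ ≤ _ := Set.ncard_le_ncard hsub (Set.toFinite _)
    _ ≤ _ := Set.ncard_union_le _ _
    _ ≤ 1 + 1 := add_le_add (hM₁.ncard_le_one o) (hM₂.ncard_le_one o)

theorem bestOf_eq_or_prefM (hpref : IsStrictRanking adj pref) (hM₁ : IsMatching adj M₁)
    (hM₂ : IsMatching adj M₂) (a : A) {M : A → Option O} (hM : M ∈ ({M₁, M₂} : Set _)) :
    bestOf pref M₁ M₂ a = M a ∨ PrefM pref a (bestOf pref M₁ M₂) M := by
  unfold bestOf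
  rcases hM with rfl | rfl <;> split_ifs with h
  · exact Or.inr ((prefM_congr (by simp [h]) rfl).2 h)
  · exact Or.inl rfl
  · exact Or.inl rfl
  · rcases prefM_trichotomous hpref (hM₁.1 a) (hM₂.1 a) with h' | h' | h'
    · exact Or.inr ((prefM_congr (by simp [h]) rfl).2 h')
    · exact Or.inl h'
    · exact absurd h' h

theorem exists_mem_pair_prefM_iff (hpref : IsStrictRanking adj pref) (hM₁ : IsMatching adj M₁)
    (hM₂ : IsMatching adj M₂) (a : A) (N : A → Option O) :
    (∃ M ∈ ({M₁, M₂} : Set _), PrefM pref a M N) ↔ PrefM pref a (bestOf pref M₁ M₂) N := by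
  constructor
  · rintro ⟨M, hM, hMN⟩
    rcases bestOf_eq_or_prefM hpref hM₁ hM₂ a hM with h | h
    · exact (prefM_congr h rfl).2 hMN
    · exact prefM_trans hpref.1 h hMN
  · intro h
    rcases bestOf_eq_or a with e | e
    exacts [⟨M₁, by simp, (prefM_congr e rfl).1 h⟩, ⟨M₂, by simp, (prefM_congr e rfl).1 h⟩]

theorem forall_mem_pair_prefM_iff (hpref : IsStrictRanking adj pref) (hM₁ : IsMatching adj M₁)
    (hM₂ : IsMatching adj M₂) (a : A) (N : A → Option O) :
    (∀ M ∈ ({M₁, M₂} : Set _), PrefM pref a N M) ↔ PrefM pref a N (bestOf pref M₁ M₂) := by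
  constructor
  · intro h
    rcases bestOf_eq_or a with e | e
    exacts [(prefM_congr rfl e).2 (h M₁ (by simp)), (prefM_congr rfl e).2 (h M₂ (by simp))]
  · intro h M hM
    rcases bestOf_eq_or_prefM hpref hM₁ hM₂ a hM with e | e
    · exact (prefM_congr rfl e).1 h
    · exact prefM_trans hpref.1 h e

theorem phiSet_pair_eq (hpref : IsStrictRanking adj pref) (hM₁ : IsMatching adj M₁)
    (hM₂ : IsMatching adj M₂) (N : A → Option O) :
    phiSet pref {M₁, M₂} N = {a | PrefM pref a (bestOf pref M₁ M₂) N}.ncard :=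
  congrArg Set.ncard (Set.ext fun a => exists_mem_pair_prefM_iff hpref hM₁ hM₂ a N)

theorem phiOne_pair_eq (hpref : IsStrictRanking adj pref) (hM₁ : IsMatching adj M₁)
    (hM₂ : IsMatching adj M₂) (N : A → Option O) :
    phiOne pref N {M₁, M₂} = {a | PrefM pref a N (bestOf pref M₁ M₂)}.ncard :=
  congrArg Set.ncard (Set.ext fun a => forall_mem_pair_prefM_iff hpref hM₁ hM₂ a N)

end BestOf

section Counting

variable [Fintype A] {B N : A → Option O}

theorem card_prefM_or_prefM (hpref : IsPrefOrder adj pref) :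
    #{c | PrefM pref c N B ∨ PrefM pref c B N} =
      #{a | PrefM pref a N B} + #{a | PrefM pref a B N} := by
  rw [filter_or, card_union_of_disjoint (disjoint_filter.2 fun _ _ h => prefM_asymm hpref h)]

theorem two_mul_card_le_card_filter (hpref : IsStrictRanking adj pref)
    (hB : ∀ a o, B a = some o → adj a o) (hN : IsMatching adj N)
    (hcrowd : ∀ a, PrefM pref a N B → ∃ o, N a = some o ∧ 1 < {c | c ≠ a ∧ B c = some o}.ncard) :
    2 * #{a | PrefM pref a N B} ≤
      #{c ∈ ({c | PrefM pref c N B ∨ PrefM pref c B N} : Finset A) |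
        B c ∈ image N {a | PrefM pref a N B}} := by
  have hinj : Set.InjOn N (({a | PrefM pref a N B} : Finset A) : Set A) := fun a ha a' _ h => by
    obtain ⟨o, hNa, -⟩ := hcrowd a (by simpa using ha)
    exact hN.2 a a' o hNa (h ▸ hNa)
  rw [← card_image_of_injOn hinj]
  refine mul_card_image_le_card_of_maps_to (f := B) (fun c hc => (mem_filter.1 hc).2) 2 ?_
  intro _ hb
  obtain ⟨a, ha, rfl⟩ := mem_image.1 hb
  obtain ⟨o, hNa, hlt⟩ := hcrowd a (mem_filter.1 ha).2
  -- The holders of `N a` in `B` differ from `a`, so they cannot hold the same object in `N`.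
  have hsub : {c | c ≠ a ∧ B c = some o} ⊆ ↑(filter (fun c => B c = N a)
      {c ∈ ({c | PrefM pref c N B ∨ PrefM pref c B N} : Finset A) |
        B c ∈ image N {a | PrefM pref a N B}}) := by
    rintro c ⟨hca, hBc⟩
    have hNc : N c ≠ B c := fun h => hca (hN.2 c a o (h.trans hBc) hNa)
    have hS := prefM_trichotomous hpref (hN.1 c) (hB c)
    simp only [coe_filter, mem_filter, mem_univ, true_and]
    exact ⟨⟨by tauto, hBc.trans hNa.symm ▸ hb⟩, hBc.trans hNa.symm⟩
  calc 2 ≤ _ := hlt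
    _ ≤ _ := Set.ncard_le_ncard hsub (Set.toFinite _)
    _ = _ := Set.ncard_coe_finset _

theorem ncard_prefM_le_ncard_prefM (hpref : IsStrictRanking adj pref)
    (hB : ∀ a o, B a = some o → adj a o) (hN : IsMatching adj N)
    (hcrowd : ∀ a, PrefM pref a N B → ∃ o, N a = some o ∧ 1 < {c | c ≠ a ∧ B c = some o}.ncard) :
    {a | PrefM pref a N B}.ncard ≤ {a | PrefM pref a B N}.ncard := by
  simp only [Set.ncard_eq_toFinset_card', Set.toFinset_ofPred]
  have := two_mul_card_le_card_filter hpref hB hN hcrowd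
  have := card_filter_le ({c | PrefM pref c N B ∨ PrefM pref c B N} : Finset A)
    fun c => B c ∈ image N {a | PrefM pref a N B}
  have := card_prefM_or_prefM (N := N) (B := B) hpref.1
  omega

theorem eq_of_ncard_prefM_le (hpref : IsStrictRanking adj pref)
    (hB : ∀ a o, B a = some o → adj a o) (hN : IsMatching adj N)
    (hcrowd : ∀ a, PrefM pref a N B → ∃ o, N a = some o ∧ 1 < {c | c ≠ a ∧ B c = some o}.ncard)
    (hcycle : ∀ Z : Set A, Z.Nonempty → (∀ a ∈ Z, PrefM pref a N B) →
      ∃ a ∈ Z, ∀ c ∈ Z, B c ≠ N a)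
    (h : {a | PrefM pref a B N}.ncard ≤ {a | PrefM pref a N B}.ncard) : N = B := by
  simp only [Set.ncard_eq_toFinset_card', Set.toFinset_ofPred] at h
  have h2 := two_mul_card_le_card_filter hpref hB hN hcrowd
  have hS := card_prefM_or_prefM (N := N) (B := B) hpref.1
  set Dp : Finset A := {a | PrefM pref a N B}
  set Dm : Finset A := {a | PrefM pref a B N}
  set S : Finset A := {c | PrefM pref c N B ∨ PrefM pref c B N}
  -- Equality in the double count: the `B`-object of every agent who changes is the `N`-object
  -- of an agent preferring `N`.
  have hall : ∀ c ∈ S, B c ∈ image N Dp :=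
    card_filter_eq_iff.1 (le_antisymm (card_filter_le _ _) (by omega))
  obtain hDp | hDp := Dp.eq_empty_or_nonempty
  · have hDm : Dm = ∅ := card_eq_zero.1 (by rw [hDp] at h; simpa using h)
    rw [eq_empty_iff_forall_notMem] at hDp hDm
    funext a
    rcases prefM_trichotomous hpref (hN.1 a) (hB a) with h' | h' | h'
    · exact absurd (mem_filter.2 ⟨mem_univ a, h'⟩) (hDp a)
    · exact h'
    · exact absurd (mem_filter.2 ⟨mem_univ a, h'⟩) (hDm a)
  · exfalso
    obtain ⟨Z, hZ, hZne, hpred⟩ := Dp.exists_nonempty_subset_forall_exists_rel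
      (R := fun c a => B c = N a) hDp fun c hc => by
        obtain ⟨a, ha, e⟩ := mem_image.1 (hall c (by simp_all [Dp, S]))
        exact ⟨a, ha, e.symm⟩
    obtain ⟨a, ha, hfree⟩ := hcycle Z (by simpa using hZne) fun a ha => by simpa [Dp] using hZ ha
    obtain ⟨c, hc, e⟩ := hpred a ha
    exact hfree c hc e

end Counting

section Pareto

variable [Finite A] {M₁ M₂ N : A → Option O}

theorem not_prefM_bestOf_of_isTwoMatching (hpref : IsStrictRanking adj pref)
    (hM₁ : IsMatching adj M₁) (hM₂ : IsMatching adj M₂) (hne : M₁ ≠ M₂)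
    (hPO : ParetoOptimal pref {M | IsMatching adj M} {M₁, M₂}) {C : A → Option O}
    (hC : IsTwoMatching adj C) (hweak : ∀ a, ¬ PrefM pref a (bestOf pref M₁ M₂) C) (a : A) :
    ¬ PrefM pref a C (bestOf pref M₁ M₂) := fun h =>
  not_paretoOptimal_of_isTwoMatching (Set.ncard_pair hne).ge hC
    (fun b M hM hMC => hweak b ((exists_mem_pair_prefM_iff hpref hM₁ hM₂ b C).1 ⟨M, hM, hMC⟩))
    ⟨a, (forall_mem_pair_prefM_iff hpref hM₁ hM₂ a C).2 h⟩ hPO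

theorem exists_mem_one_lt_ncard_of_prefM_bestOf (hpref : IsStrictRanking adj pref)
    (hM₁ : IsMatching adj M₁) (hM₂ : IsMatching adj M₂) (hne : M₁ ≠ M₂)
    (hPO : ParetoOptimal pref {M | IsMatching adj M} {M₁, M₂}) (hN : IsMatching adj N)
    {Z : Set A} (hZ : Z.Nonempty) (himp : ∀ a ∈ Z, PrefM pref a N (bestOf pref M₁ M₂)) :
    ∃ a ∈ Z, ∃ o, N a = some o ∧ 1 < {c | c ∉ Z ∧ bestOf pref M₁ M₂ c = some o}.ncard := by
  by_contra! hcap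
  obtain ⟨a, ha⟩ := hZ
  refine not_prefM_bestOf_of_isTwoMatching hpref hM₁ hM₂ hne hPO
    ((isTwoMatching_bestOf hM₁ hM₂).piecewise hN hcap) (fun b => ?_) a ?_
  · by_cases hb : b ∈ Z
    · exact (prefM_congr rfl (Set.piecewise_eq_of_mem _ _ _ hb)).not.2
        (prefM_asymm hpref.1 (himp b hb))
    · exact (prefM_congr rfl (Set.piecewise_eq_of_notMem _ _ _ hb)).not.2
        (prefM_irrefl hpref.1 b _)
  · exact (prefM_congr (Set.piecewise_eq_of_mem _ _ _ ha) rfl).2 (himp a ha)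

theorem one_lt_ncard_of_prefM_bestOf (hpref : IsStrictRanking adj pref)
    (hM₁ : IsMatching adj M₁) (hM₂ : IsMatching adj M₂) (hne : M₁ ≠ M₂)
    (hPO : ParetoOptimal pref {M | IsMatching adj M} {M₁, M₂}) (hN : IsMatching adj N)
    {b : A} (h : PrefM pref b N (bestOf pref M₁ M₂)) :
    ∃ o, N b = some o ∧ 1 < {c | c ≠ b ∧ bestOf pref M₁ M₂ c = some o}.ncard := by
  simpa using exists_mem_one_lt_ncard_of_prefM_bestOf hpref hM₁ hM₂ hne hPO hN
    (Set.singleton_nonempty b) (by simpa using h)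

theorem isTopChoice_bestOf (hpref : IsStrictRanking adj pref)
    (hM₁ : IsMatching adj M₁) (hM₂ : IsMatching adj M₂) (hne : M₁ ≠ M₂)
    (hPO : ParetoOptimal pref {M | IsMatching adj M} {M₁, M₂})
    (hB : IsMatching adj (bestOf pref M₁ M₂)) :
    IsTopChoice pref {M | IsMatching adj M} (bestOf pref M₁ M₂) := by
  refine ⟨hB, fun b ⟨N, hN, h⟩ => ?_⟩
  obtain ⟨o, -, hlt⟩ := one_lt_ncard_of_prefM_bestOf hpref hM₁ hM₂ hne hPO hN h
  have hsub : {c | c ≠ b ∧ bestOf pref M₁ M₂ c = some o} ⊆ {c | bestOf pref M₁ M₂ c = some o} :=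
    fun _ hc => hc.2
  have := (Set.ncard_le_ncard hsub (Set.toFinite _)).trans (hB.ncard_le_one o)
  omega

theorem exists_forall_bestOf_ne (hpref : IsStrictRanking adj pref)
    (hM₁ : IsMatching adj M₁) (hM₂ : IsMatching adj M₂) (hne : M₁ ≠ M₂)
    (hPO : ParetoOptimal pref {M | IsMatching adj M} {M₁, M₂}) (hN : IsMatching adj N)
    {Z : Set A} (hZ : Z.Nonempty) (himp : ∀ a ∈ Z, PrefM pref a N (bestOf pref M₁ M₂)) :
    ∃ a ∈ Z, ∀ c ∈ Z, bestOf pref M₁ M₂ c ≠ N a := by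
  obtain ⟨a, ha, o, hNa, hlt⟩ :=
    exists_mem_one_lt_ncard_of_prefM_bestOf hpref hM₁ hM₂ hne hPO hN hZ himp
  refine ⟨a, ha, fun c hc hBc => ?_⟩
  have hsub : {c' | c' ∉ Z ∧ bestOf pref M₁ M₂ c' = some o} ⊆
      {c' | bestOf pref M₁ M₂ c' = some o} \ {c} :=
    fun c' hc' => ⟨hc'.2, fun h => hc'.1 ((Set.mem_singleton_iff.1 h) ▸ hc)⟩
  have := (Set.ncard_le_ncard hsub (Set.toFinite _)).trans_eq
    (Set.ncard_sdiff_singleton_of_mem (s := {c' | bestOf pref M₁ M₂ c' = some o})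
      (hBc.trans hNa))
  have := (isTwoMatching_bestOf (pref := pref) hM₁ hM₂).2 o
  omega

end Pareto

end

theorem pareto_optimal_pair_popular_of_strict_general
    {A O : Type*} [Fintype A]
    (adj : A → O → Prop) (pref : A → O → O → Prop)
    (hpref : IsStrictRanking adj pref)
    (M₁ M₂ : A → Option O) (hM₁ : IsMatching adj M₁) (hM₂ : IsMatching adj M₂)
    (hne : M₁ ≠ M₂)
    (hPO : ParetoOptimal pref {M | IsMatching adj M} {M₁, M₂}) :
    Popular pref {M | IsMatching adj M} {M₁, M₂} ∧
      (StronglyPopular pref {M | IsMatching adj M} {M₁, M₂} ∨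
        ∃ T, IsTopChoice pref {M | IsMatching adj M} T) := by
  have hB := (isTwoMatching_bestOf (pref := pref) hM₁ hM₂).1
  have hcrowd := fun N (hN : IsMatching adj N) a =>
    one_lt_ncard_of_prefM_bestOf (b := a) hpref hM₁ hM₂ hne hPO hN
  refine ⟨fun N hN => ?_, or_iff_not_imp_left.2 fun hweak => ?_⟩
  · rw [phiOne_pair_eq hpref hM₁ hM₂, phiSet_pair_eq hpref hM₁ hM₂]
    exact ncard_prefM_le_ncard_prefM hpref hB hN (hcrowd N hN)
  · simp only [StronglyPopular, not_forall, not_lt] at hweak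
    obtain ⟨N, hN, -, hle⟩ := hweak
    rw [phiOne_pair_eq hpref hM₁ hM₂, phiSet_pair_eq hpref hM₁ hM₂] at hle
    have hNB := eq_of_ncard_prefM_le hpref hB hN (hcrowd N hN)
      (fun Z => exists_forall_bestOf_ne hpref hM₁ hM₂ hne hPO hN) hle
    exact ⟨_, isTopChoice_bestOf hpref hM₁ hM₂ hne hPO (hNB ▸ hN)⟩

/-- If preferences are strict rankings and `{M₁, M₂}` is a
Pareto-optimal set of two matchings, then `{M₁, M₂}` is popular; moreover, either it is
strongly popular or a top-choice matching exists. -/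
theorem pareto_optimal_pair_popular_of_strict
    {A O : Type*} [Fintype A] [Fintype O]
    (adj : A → O → Prop) (pref : A → O → O → Prop)
    (hpref : IsStrictRanking adj pref)
    (M₁ M₂ : A → Option O) (hM₁ : IsMatching adj M₁) (hM₂ : IsMatching adj M₂)
    (hne : M₁ ≠ M₂)
    (hPO : ParetoOptimal pref {M | IsMatching adj M} {M₁, M₂}) :
    Popular pref {M | IsMatching adj M} {M₁, M₂} ∧
      (StronglyPopular pref {M | IsMatching adj M} {M₁, M₂} ∨
        ∃ T, IsTopChoice pref {M | IsMatching adj M} T) :=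
  pareto_optimal_pair_popular_of_strict_general adj pref hpref M₁ M₂ hM₁ hM₂ hne hPO
end

section
/- Let (G, ≻) be a matching instance with strict rankings, let ℳ = {M₁, M₂} be a Pareto-optimal set of two matchings in G such that every agent is matched in at most one of M₁ and M₂, and let N be any matching in G. Then for every agent a such that N ≻_a M₁ and N ≻_a M₂, there exist two distinct agents b₁ ≠ b₂ with M₁(b₁) = N(a) = M₂(b₂), and each bᵢ (i = 1, 2) satisfies N(bᵢ) ≠ Mᵢ(bᵢ), i.e., bᵢ is not indifferent between ℳ and N. -/
open scoped Classical

/-! If no agent other than `a` holds `N(a)` in `M`, then giving `N(a)` to `a` in `M` improves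
`a` over both matchings and, because every other agent is matched in at most one of `M` and
`M'`, hurts nobody: the agents unmatched in `M` keep their object of `M'`, and the others keep
their object of `M`. So `{M[a ↦ N(a)], M'}` Pareto-dominates `{M, M'}`. Applying this to both
matchings gives the two agents; they differ since nobody is matched in both, and neither gets
`N(a)` in `N`, since `a` does. -/

section

variable {A O : Type*} {adj : A → O → Prop} {pref : A → O → O → Prop}

namespace PrefM

variable {a : A} {M M' N : A → Option O}

theorem exists_eq_some_left (h : PrefM pref a M N) : ∃ o, M a = some o := by
  rcases h with ⟨o, -, hM, -⟩ | ⟨o, hM, -⟩ <;> exact ⟨o, hM⟩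

theorem not_of_eq_none (hM : M a = none) : ¬ PrefM pref a M N := by
  rintro (⟨o, -, h, -⟩ | ⟨o, h, -⟩) <;> simp [hM] at h

theorem congr_left (hMM' : M a = M' a) (h : PrefM pref a M N) : PrefM pref a M' N := by
  unfold PrefM at *
  rwa [← hMM']

theorem asymm (hpo : IsPrefOrder adj pref) (h : PrefM pref a M N) : ¬ PrefM pref a N M := by
  rcases h with ⟨o, o', hM, hN, h⟩ | ⟨o, hM, hN⟩
  · rintro (⟨p, p', hN', hM', h'⟩ | ⟨p, -, hM'⟩)
    · rw [hN, Option.some_inj] at hN'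
      rw [hM, Option.some_inj] at hM'
      subst hN' hM'
      exact (hpo a).1 o ((hpo a).2.1 _ _ _ h h')
    · simp [hM] at hM'
  · exact not_of_eq_none hN

theorem irrefl_of_eq (hpo : IsPrefOrder adj pref) (hMN : M a = N a) : ¬ PrefM pref a M N :=
  fun h => (h.congr_left hMN).asymm hpo (h.congr_left hMN)

end PrefM

theorem IsMatching.update [DecidableEq A] {M : A → Option O} (hM : IsMatching adj M)
    {a : A} {o : O} (hadj : adj a o) (hfree : ∀ b, b ≠ a → M b ≠ some o) :
    IsMatching adj (Function.update M a (some o)) := by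
  have hupd : ∀ b p, Function.update M a (some o) b = some p →
      (b = a ∧ p = o) ∨ (b ≠ a ∧ p ≠ o ∧ M b = some p) := by
    intro b p hb
    by_cases hba : b = a
    · subst hba
      simp_all
    · rw [Function.update_of_ne hba] at hb
      exact Or.inr ⟨hba, fun hpo => hfree b hba (hpo ▸ hb), hb⟩
  constructor
  · intro b p hb
    rcases hupd b p hb with ⟨rfl, rfl⟩ | ⟨-, -, hb⟩
    exacts [hadj, hM.1 b p hb]
  · intro b b' p hb hb'
    rcases hupd b p hb with ⟨rfl, rfl⟩ | ⟨-, hpo, hb⟩ <;>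
      rcases hupd b' p hb' with ⟨rfl, hpo'⟩ | ⟨-, hpo', hb'⟩
    exacts [rfl, absurd rfl hpo', absurd hpo' hpo, hM.2 b b' p hb hb']

theorem dominates_update_pair [DecidableEq A] (hpo : IsPrefOrder adj pref)
    {M M' : A → Option O} (hne : M ≠ M') (honce : ∀ b, M b = none ∨ M' b = none)
    {a : A} {x : Option O} (h : PrefM pref a (Function.update M a x) M)
    (h' : PrefM pref a (Function.update M a x) M') :
    Dominates pref {Function.update M a x, M'} {M, M'} := by
  simp only [Dominates, Set.mem_insert_iff, Set.mem_singleton_iff, forall_eq_or_imp, forall_eq,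
    exists_eq_or_imp, exists_eq_left]
  refine ⟨?_, fun b => ?_, ⟨a, Or.inl ⟨h, h'⟩⟩⟩
  · calc ({Function.update M a x, M'} : Set (A → Option O)).ncard
        ≤ ({M'} : Set (A → Option O)).ncard + 1 := Set.ncard_insert_le _ _
      _ = ({M, M'} : Set (A → Option O)).ncard := by rw [Set.ncard_singleton, Set.ncard_pair hne]
  by_cases hba : b = a
  · subst hba
    exact Or.inl ⟨h.asymm hpo, h'.asymm hpo⟩
  rcases honce b with hM | hM'
  · exact Or.inr ⟨PrefM.not_of_eq_none hM, PrefM.irrefl_of_eq hpo rfl⟩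
  · exact Or.inl ⟨PrefM.irrefl_of_eq hpo (Function.update_of_ne hba x M).symm,
      PrefM.not_of_eq_none hM'⟩

theorem ParetoOptimal.exists_ne_eq_some (hpo : IsPrefOrder adj pref)
    {M M' : A → Option O} (hM : IsMatching adj M) (hM' : IsMatching adj M') (hne : M ≠ M')
    (honce : ∀ b, M b = none ∨ M' b = none)
    (hPO : ParetoOptimal pref {X | IsMatching adj X} {M, M'})
    {N : A → Option O} {a : A} {o : O} (hadj : adj a o) (hNa : N a = some o)
    (h : PrefM pref a N M) (h' : PrefM pref a N M') :
    ∃ b, b ≠ a ∧ M b = some o := by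
  by_contra! hfree
  have hupd : Function.update M a (some o) a = N a := by simp [hNa]
  refine hPO ⟨_, ?_, dominates_update_pair hpo hne honce
    (h.congr_left hupd.symm) (h'.congr_left hupd.symm)⟩
  exact Set.insert_subset_iff.mpr ⟨hM.update hadj hfree, Set.singleton_subset_iff.mpr hM'⟩

end

theorem exists_two_successors_general
    {A O : Type*}
    (adj : A → O → Prop) (pref : A → O → O → Prop)
    (hpref : IsStrictRanking adj pref)
    (M₁ M₂ : A → Option O) (hM₁ : IsMatching adj M₁) (hM₂ : IsMatching adj M₂)
    (hne : M₁ ≠ M₂)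
    (honce : ∀ a : A, M₁ a = none ∨ M₂ a = none)
    (hPO : ParetoOptimal pref {M | IsMatching adj M} {M₁, M₂})
    (N : A → Option O) (hN : IsMatching adj N) :
    ∀ a : A, PrefM pref a N M₁ → PrefM pref a N M₂ →
      ∃ b₁ b₂ : A, b₁ ≠ b₂ ∧ M₁ b₁ = N a ∧ M₂ b₂ = N a ∧
        N b₁ ≠ M₁ b₁ ∧ N b₂ ≠ M₂ b₂ := by
  intro a h₁ h₂
  obtain ⟨o, hNa⟩ := h₁.exists_eq_some_left
  have hadj : adj a o := hN.1 a o hNa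
  obtain ⟨b₁, hb₁a, hb₁⟩ :=
    hPO.exists_ne_eq_some hpref.1 hM₁ hM₂ hne honce hadj hNa h₁ h₂
  obtain ⟨b₂, hb₂a, hb₂⟩ :=
    (Set.pair_comm M₁ M₂ ▸ hPO).exists_ne_eq_some hpref.1 hM₂ hM₁ hne.symm
      (fun b => (honce b).symm) hadj hNa h₂ h₁
  have hN_ne : ∀ b, b ≠ a → N b ≠ some o := fun b hba hb => hba (hN.2 b a o hb hNa)
  refine ⟨b₁, b₂, ?_, hb₁.trans hNa.symm, hb₂.trans hNa.symm,
    hb₁ ▸ hN_ne b₁ hb₁a, hb₂ ▸ hN_ne b₂ hb₂a⟩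
  rintro rfl
  rcases honce b₁ with h | h <;> simp_all

/-- Under strict rankings, for a Pareto-optimal set `{M₁, M₂}` in which
every agent is matched in at most one of the two matchings, every agent preferring `N`
to both matchings yields two distinct agents receiving `N(a)` in `M₁` and `M₂`
respectively, neither of whom is indifferent between `{M₁, M₂}` and `N`. -/
theorem exists_two_successors
    {A O : Type*} [Fintype A] [Fintype O]
    (adj : A → O → Prop) (pref : A → O → O → Prop)
    (hpref : IsStrictRanking adj pref)
    (M₁ M₂ : A → Option O) (hM₁ : IsMatching adj M₁) (hM₂ : IsMatching adj M₂)
    (hne : M₁ ≠ M₂)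
    (honce : ∀ a : A, M₁ a = none ∨ M₂ a = none)
    (hPO : ParetoOptimal pref {M | IsMatching adj M} {M₁, M₂})
    (N : A → Option O) (hN : IsMatching adj N) :
    ∀ a : A, PrefM pref a N M₁ → PrefM pref a N M₂ →
      ∃ b₁ b₂ : A, b₁ ≠ b₂ ∧ M₁ b₁ = N a ∧ M₂ b₂ = N a ∧
        N b₁ ≠ M₁ b₁ ∧ N b₂ ≠ M₂ b₂ :=
  exists_two_successors_general adj pref hpref M₁ M₂ hM₁ hM₂ hne honce hPO N hN
end

section
/- Let (G, ℐ, ≻) be a matroid-constrained matching instance in which preferences are weak rankings. Then there exists a popular set of at most two ℐ-constrained matchings in G. -/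
open scoped Classical

/-- Preferences are weak rankings: each `pref a` is a strict partial order whose induced
incomparability relation is transitive on the objects adjacent to `a`. -/
def IsWeakRanking {A O : Type*} (adj : A → O → Prop) (pref : A → O → O → Prop) : Prop :=
  IsPrefOrder adj pref ∧
  ∀ a o o' o'', adj a o → adj a o' → adj a o'' →
    (¬ pref a o o' ∧ ¬ pref a o' o) → (¬ pref a o' o'' ∧ ¬ pref a o'' o') →
    (¬ pref a o o'' ∧ ¬ pref a o'' o)

/-- The set `M(A)` of objects matched to agents. -/
def matchedObjs {A O : Type*} (M : A → Option O) : Set O := {o | ∃ a, M a = some o}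

/-- A matching is `ℐ`-constrained if the set of matched objects is independent. -/
def IsConstrained {A O : Type*} (adj : A → O → Prop) (Mat : Matroid O)
    (M : A → Option O) : Prop :=
  IsMatching adj M ∧ Mat.Indep (matchedObjs M)

/-!
Weak rankings are exactly the preferences induced by utilities (`util`: one plus the number of
objects ranked lower). A pair of `ℐ`-constrained matchings in which no agent is matched twice is
one matching into two tagged copies `Bool × O` of the objects, constrained by the direct sum of
two copies of `ℐ`; take such a matching `τ` of maximum total utility. Fix a competitor `N`. Its
winners prefer `N` to both matchings, its losers prefer one of them to `N`. Let `R` be the agents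
reachable from the winners along exchange edges. By maximality, both copies of the `N`-object of
every agent of `R` are spanned by `τ`, and, via fundamental circuits, already by the objects `τ`
gives to `R` and to the losers. Comparing ranks gives `2 |R| ≤ |R| + |losers|`, so
`|winners| ≤ |R| ≤ |losers|`.
-/

namespace Matroid

variable {α : Type*} {M : Matroid α} {I J X Y : Set α} {e f : α}

lemma Indep.mem_closure_setOf_notMem_closure_sdiff (hI : M.Indep I) (he : e ∈ M.closure I) :
    e ∈ M.closure {x ∈ I | e ∉ M.closure (I \ {x})} := by
  have hmem : e ∈ M.closure (⋂₀ {J | J ⊆ I ∧ e ∈ M.closure J}) := by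
    rw [hI.closure_sInter_eq_biInter_closure_of_forall_subset
      (Js := {J | J ⊆ I ∧ e ∈ M.closure J}) ⟨I, subset_rfl, he⟩ fun J hJ => hJ.1]
    exact Set.mem_iInter₂.2 fun J hJ => hJ.2
  refine M.closure_subset_closure (fun x hx => ?_) hmem
  rw [Set.mem_sInter] at hx
  exact ⟨hx I ⟨subset_rfl, he⟩, fun hex => (hx (I \ {x}) ⟨Set.sdiff_subset, hex⟩).2 rfl⟩

lemma Indep.ncard_le_ncard_of_subset_closure (hI : M.Indep I) (hJ : M.Indep J)
    (hIJ : I ⊆ M.closure J) (hJfin : J.Finite) : I.ncard ≤ J.ncard := by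
  have h : I.encard ≤ J.encard := by
    calc I.encard ≤ M.eRk (M.closure J) := hI.encard_le_eRk_of_subset hIJ
      _ = J.encard := by rw [eRk_closure_eq, hJ.eRk_eq_encard]
  have hIfin : I.Finite := Set.finite_of_encard_le_coe (h.trans_eq hJfin.cast_ncard_eq.symm)
  rw [← hIfin.cast_ncard_eq, ← hJfin.cast_ncard_eq] at h
  exact_mod_cast h

lemma notMem_closure_insert_of_notMem_closure (hXY : X ⊆ M.closure Y) (he : e ∈ M.closure Y)
    (hf : f ∉ M.closure Y) (heX : e ∉ M.closure X) : e ∉ M.closure (insert f X) := fun h =>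
  hf (M.closure_subset_closure_of_subset_closure (Set.insert_subset he hXY)
    (M.mem_closure_insert heX h))

end Matroid

namespace Set

variable {α β : Type*}

lemma ncard_setOf_exists_eq_some_le [Finite α] (f : α → Option β) (X : Set α) :
    {b | ∃ a ∈ X, f a = some b}.ncard ≤ X.ncard := by
  rw [← Set.ncard_image_of_injective _ (Option.some_injective β)]
  refine (Set.ncard_le_ncard ?_).trans (Set.ncard_image_le (f := f))
  rintro _ ⟨b, ⟨a, ha, hab⟩, rfl⟩
  exact ⟨a, ha, hab⟩

lemma ncard_le_ncard_setOf_exists_eq_some [Finite β] {f : α → Option β} {X : Set α}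
    (hf : ∀ a ∈ X, f a ≠ none) (hinj : Set.InjOn f X) :
    X.ncard ≤ {b | ∃ a ∈ X, f a = some b}.ncard := by
  rw [← hinj.ncard_image, ← Set.ncard_image_of_injective _ (Option.some_injective β)]
  refine Set.ncard_le_ncard ?_
  rintro _ ⟨a, ha, rfl⟩
  obtain ⟨b, hb⟩ := Option.ne_none_iff_exists'.1 (hf a ha)
  exact ⟨b, ⟨a, ha, hb⟩, hb.symm⟩

end Set

namespace ConstrainedMatching

section Utility

variable {A O : Type*} {adj : A → O → Prop} {pref : A → O → O → Prop} {a : A} {o o' : O}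

noncomputable def util (pref : A → O → O → Prop) (a : A) : Option O → ℕ
  | none => 0
  | some o => {o' | pref a o o'}.ncard + 1

lemma util_some_pos (pref : A → O → O → Prop) (a : A) (o : O) : 0 < util pref a (some o) :=
  Nat.succ_pos _

lemma setOf_pref_ssubset (h : IsPrefOrder adj pref) (hoo' : pref a o o') :
    {z | pref a o' z} ⊂ {z | pref a o z} := by
  obtain ⟨hirr, htrans, -⟩ := h a
  exact Set.ssubset_iff_of_subset (fun z => htrans o o' z hoo') |>.2
    ⟨o', hoo', hirr o'⟩

lemma setOf_pref_eq_of_incomparable (h : IsWeakRanking adj pref) (ho : adj a o)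
    (ho' : adj a o') (hoo' : ¬ pref a o o') (ho'o : ¬ pref a o' o) :
    {z | pref a o z} = {z | pref a o' z} := by
  obtain ⟨hord, hinc⟩ := h
  obtain ⟨-, htrans, hadj⟩ := hord a
  have key : ∀ x y, adj a x → adj a y → ¬ pref a x y → ¬ pref a y x →
      ∀ z, pref a x z → pref a y z := by
    intro x y hx hy hxy hyx z hxz
    by_contra hyz
    by_cases hzy : pref a z y
    · exact hxy (htrans x z y hxz hzy)
    · exact (hinc a x y z hx hy (hadj x z hxz).2 ⟨hxy, hyx⟩ ⟨hyz, hzy⟩).1 hxz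
  ext z
  exact ⟨key o o' ho ho' hoo' ho'o z, key o' o ho' ho ho'o hoo' z⟩

lemma util_lt_util_iff [Finite O] (h : IsWeakRanking adj pref) (ho : adj a o) (ho' : adj a o') :
    util pref a (some o') < util pref a (some o) ↔ pref a o o' := by
  have hlt : ∀ {x y}, pref a x y → util pref a (some y) < util pref a (some x) := fun hxy =>
    Nat.succ_lt_succ (Set.ncard_lt_ncard (setOf_pref_ssubset h.1 hxy))
  refine ⟨fun hu => ?_, hlt⟩
  by_contra hoo'
  by_cases ho'o : pref a o' o
  · exact (hlt ho'o).not_gt hu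
  · simp only [util, setOf_pref_eq_of_incomparable h ho ho' hoo' ho'o] at hu
    exact hu.false

lemma prefM_iff_util_lt [Finite O] (h : IsWeakRanking adj pref) {M N : A → Option O}
    (hM : ∀ o, M a = some o → adj a o) (hN : ∀ o, N a = some o → adj a o) :
    PrefM pref a M N ↔ util pref a (N a) < util pref a (M a) := by
  rcases hMa : M a with _ | o <;> rcases hNa : N a with _ | o'
  · simp [PrefM, hMa, util]
  · simp [PrefM, hMa, util]
  · simp [PrefM, hMa, hNa, util]
  · simp only [PrefM, hMa, hNa, Option.some.injEq, exists_and_left, exists_eq_left',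
      reduceCtorEq, and_false, exists_false, or_false]
    exact (util_lt_util_iff h (hM o hMa) (hN o' hNa)).symm

end Utility

section MaxWeight

variable {A S : Type*} {adj : A → S → Prop} {M : Matroid S} {τ : A → Option S} {c : A}
  {s x : S}

lemma matchedObjs_update_subset (τ : A → Option S) (c : A) (s : S) :
    matchedObjs (Function.update τ c (some s)) ⊆ insert s (matchedObjs τ) := by
  rintro o ⟨a, ha⟩
  rcases eq_or_ne a c with rfl | hac
  · simp_all
  · rw [Function.update_of_ne hac] at ha
    exact Or.inr ⟨a, ha⟩

lemma matchedObjs_update_subset_of_eq_some (hτ : IsMatching adj τ) (hc : τ c = some x) :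
    matchedObjs (Function.update τ c (some s)) ⊆ insert s (matchedObjs τ \ {x}) := by
  rintro o ⟨a, ha⟩
  rcases eq_or_ne a c with rfl | hac
  · simp_all
  · rw [Function.update_of_ne hac] at ha
    exact Or.inr ⟨⟨a, ha⟩, fun hox => hac (hτ.2 a c o ha (hox ▸ hc))⟩

lemma isConstrained_update (hτ : IsConstrained adj M τ) (hcs : adj c s) (hsE : s ∈ M.E)
    (hs : s ∉ M.closure (matchedObjs τ)) :
    IsConstrained adj M (Function.update τ c (some s)) := by
  have hsT : s ∉ matchedObjs τ := fun h => hs (M.subset_closure _ hτ.2.subset_ground h)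
  refine ⟨⟨fun a o ha => ?_, fun a a' o ha ha' => ?_⟩, ?_⟩
  · rcases eq_or_ne a c with rfl | hac
    · simp_all
    · rw [Function.update_of_ne hac] at ha
      exact hτ.1.1 a o ha
  · have key : ∀ b b', b = c → b' ≠ c → Function.update τ c (some s) b = some o →
        Function.update τ c (some s) b' = some o → False := by
      rintro b b' rfl hb' hb hb''
      rw [Function.update_self, Option.some_inj] at hb
      rw [Function.update_of_ne hb', ← hb] at hb''
      exact hsT ⟨b', hb''⟩
    by_cases hac : a = c <;> by_cases ha'c : a' = c
    · rw [hac, ha'c]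
    · exact (key a a' hac ha'c ha ha').elim
    · exact (key a' a ha'c hac ha' ha).elim
    · rw [Function.update_of_ne hac] at ha
      rw [Function.update_of_ne ha'c] at ha'
      exact hτ.1.2 a a' o ha ha'
  · exact ((hτ.2.insert_indep_iff_of_notMem hsT).2 ⟨hsE, hs⟩).subset
      (matchedObjs_update_subset τ c s)

variable [Fintype A]

def weight (wt : A → Option S → ℕ) (τ : A → Option S) : ℕ := ∑ a, wt a (τ a)

lemma weight_update_add (wt : A → Option S → ℕ) (τ : A → Option S) (c : A) (v : Option S) :
    weight wt (Function.update τ c v) + wt c (τ c) = weight wt τ + wt c v := by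
  unfold weight
  rw [← Finset.add_sum_erase _ _ (Finset.mem_univ c), ← Finset.add_sum_erase _ _
    (Finset.mem_univ c), Function.update_self, Finset.sum_congr rfl fun a ha =>
      by rw [Function.update_of_ne (Finset.ne_of_mem_erase ha)]]
  ring

def IsMaxWeight (adj : A → S → Prop) (M : Matroid S) (wt : A → Option S → ℕ)
    (τ : A → Option S) : Prop :=
  IsConstrained adj M τ ∧ ∀ τ', IsConstrained adj M τ' → weight wt τ' ≤ weight wt τ

lemma exists_isMaxWeight [Finite S] (adj : A → S → Prop) (M : Matroid S)
    (wt : A → Option S → ℕ) : ∃ τ, IsMaxWeight adj M wt τ := by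
  have hempty : IsConstrained adj M fun _ => none := by
    refine ⟨⟨by simp, by simp⟩, ?_⟩
    convert M.empty_indep
    simp [matchedObjs]
  obtain ⟨τ, hτ, hmax⟩ := Set.exists_max_image {τ | IsConstrained adj M τ} (weight wt)
    (Set.toFinite _) ⟨_, hempty⟩
  exact ⟨τ, hτ, hmax⟩

end MaxWeight

section Exchange

variable {A S : Type*} {adj : A → S → Prop} {M : Matroid S} {wt : A → Option S → ℕ}

/-- A competing matching, offering agent `a` any slot of `slots a`, each worth `val a` to `a`
(for a matching `N` of the original instance, the two copies of `N a`). -/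
structure Competitor (adj : A → S → Prop) (M : Matroid S) (wt : A → Option S → ℕ) where
  slots : A → Set S
  val : A → ℕ
  adj_of_mem : ∀ a, ∀ s ∈ slots a, adj a s
  mem_ground : ∀ a, ∀ s ∈ slots a, s ∈ M.E
  wt_eq : ∀ a, ∀ s ∈ slots a, wt a (some s) = val a

namespace Competitor

variable (Q : Competitor adj M wt) (τ : A → Option S)

def winners : Set A := {a | wt a (τ a) < Q.val a}

def losers : Set A := {a | Q.val a < wt a (τ a)}

/-- Adding a slot `s` of `c` to the slots used by `τ` forces removing the slot `x` of `d`,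
which is not a loser. -/
def IsEdge (c d : A) : Prop :=
  d ∉ Q.losers τ ∧
    ∃ s ∈ Q.slots c, ∃ x, τ d = some x ∧ s ∉ M.closure (matchedObjs τ \ {x})

def reachIn : ℕ → Set A
  | 0 => Q.winners τ
  | n + 1 => {d | ∃ c ∈ reachIn n, Q.IsEdge τ c d}

def reach : Set A := {c | ∃ n, c ∈ Q.reachIn τ n}

def Spanned (c : A) : Prop := Q.slots c ⊆ M.closure (matchedObjs τ)

variable {Q τ} {c : A} {s : S}

lemma reachIn_subset_reachIn_update (hT : M.Indep (matchedObjs τ))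
    (hfree : s ∉ M.closure (matchedObjs τ)) (hc : ¬ Q.Spanned τ c)
    (hwt : ∀ a, wt a (Function.update τ c (some s) a) = wt a (τ a)) {n : ℕ}
    (hspan : ∀ m ≤ n, ∀ y ∈ Q.reachIn τ m, Q.Spanned τ y) :
    ∀ m ≤ n, Q.reachIn τ m ⊆ Q.reachIn (Function.update τ c (some s)) m := by
  intro m
  induction m with
  | zero =>
    intro _ a ha
    simpa only [reachIn, winners, Set.mem_ofPred_eq, hwt] using ha
  | succ m ih =>
    rintro hm d ⟨y, hy, hdL, sy, hsy, x, hdx, hsyx⟩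
    have hdc : d ≠ c := by
      rintro rfl
      exact hc (hspan _ hm d ⟨y, hy, hdL, sy, hsy, x, hdx, hsyx⟩)
    refine ⟨y, ih (by omega) hy, by simpa only [losers, Set.mem_ofPred_eq, hwt] using hdL,
      sy, hsy, x, by rwa [Function.update_of_ne hdc], fun hmem => ?_⟩
    have hsub : matchedObjs (Function.update τ c (some s)) \ {x} ⊆
        insert s (matchedObjs τ \ {x}) :=
      (Set.sdiff_subset_sdiff_left (matchedObjs_update_subset τ c s)).trans
        Set.insert_sdiff_subset
    exact M.notMem_closure_insert_of_notMem_closure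
      (Set.sdiff_subset.trans (M.subset_closure _ hT.subset_ground))
      (hspan m (by omega) y hy hsy) hfree hsyx (M.closure_subset_closure hsub hmem)

lemma val_pos_of_mem_reach (hwt : ∀ a x, 0 < wt a (some x)) (hc : c ∈ Q.reach τ) :
    0 < Q.val c := by
  obtain ⟨_ | n, hc⟩ := hc
  · exact lt_of_le_of_lt (Nat.zero_le _) hc
  · obtain ⟨-, -, hcL, -, -, x, hcx, -⟩ := hc
    have := hwt c x
    rw [← hcx] at this
    exact lt_of_lt_of_le this (not_lt.1 hcL)

variable [Fintype A]

lemma val_le_of_notMem_closure (hτ : IsMaxWeight adj M wt τ) (hs : s ∈ Q.slots c)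
    (hfree : s ∉ M.closure (matchedObjs τ)) : Q.val c ≤ wt c (τ c) := by
  have h := hτ.2 _ (isConstrained_update hτ.1 (Q.adj_of_mem c s hs) (Q.mem_ground c s hs) hfree)
  have := weight_update_add wt τ c (some s)
  rw [Q.wt_eq c s hs] at this
  omega

lemma isMaxWeight_update (hτ : IsMaxWeight adj M wt τ) (hs : s ∈ Q.slots c)
    (hfree : s ∉ M.closure (matchedObjs τ)) (htie : wt c (τ c) = Q.val c) :
    IsMaxWeight adj M wt (Function.update τ c (some s)) := by
  refine ⟨isConstrained_update hτ.1 (Q.adj_of_mem c s hs) (Q.mem_ground c s hs) hfree,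
    fun τ' hτ' => ?_⟩
  have := weight_update_add wt τ c (some s)
  rw [Q.wt_eq c s hs] at this
  have := hτ.2 τ' hτ'
  omega

/-- If `c`, reached in `n + 1` steps, had a free slot `s`, it would be neither a winner nor a
loser, so moving it to `s` keeps `τ` of maximum weight; but then its predecessor, still reached in
`n` steps, has a free slot. -/
theorem spanned_of_mem_reachIn {n : ℕ} (hτ : IsMaxWeight adj M wt τ)
    (hc : c ∈ Q.reachIn τ n) : Q.Spanned τ c := by
  induction n using Nat.strong_induction_on generalizing τ c with
  | _ n ih =>
  intro s hs
  by_contra hfree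
  have hle := val_le_of_notMem_closure hτ hs hfree
  cases n with
  | zero => exact absurd hc (not_lt.2 hle)
  | succ n =>
  obtain ⟨b, hb, hcL, sb, hsb, x, hcx, hsbx⟩ := hc
  have htie : wt c (τ c) = Q.val c := le_antisymm (not_lt.1 hcL) hle
  have hwt : ∀ a, wt a (Function.update τ c (some s) a) = wt a (τ a) := by
    intro a
    rcases eq_or_ne a c with rfl | hac
    · rw [Function.update_self, Q.wt_eq a s hs, htie]
    · rw [Function.update_of_ne hac]
  have hspan : ∀ m ≤ n, ∀ y ∈ Q.reachIn τ m, Q.Spanned τ y := fun m hm y hy =>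
    ih m (by omega) hτ hy
  have hb' := reachIn_subset_reachIn_update hτ.1.2 hfree (fun h => hfree (h hs)) hwt hspan n
    le_rfl hb
  have hsb' := ih n (by omega) (isMaxWeight_update hτ hs hfree htie) hb' hsb
  exact M.notMem_closure_insert_of_notMem_closure
    (Set.sdiff_subset.trans (M.subset_closure _ hτ.1.2.subset_ground))
    (hspan n le_rfl b hb hsb) hfree hsbx
    (M.closure_subset_closure (matchedObjs_update_subset_of_eq_some hτ.1.1 hcx) hsb')

theorem biUnion_slots_reach_subset_closure (hτ : IsMaxWeight adj M wt τ) :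
    ⋃ c ∈ Q.reach τ, Q.slots c ⊆
      M.closure {x | ∃ d ∈ Q.reach τ ∪ Q.losers τ, τ d = some x} := by
  simp only [Set.iUnion_subset_iff]
  rintro c ⟨n, hc⟩ s hs
  refine M.closure_subset_closure ?_
    (hτ.1.2.mem_closure_setOf_notMem_closure_sdiff (spanned_of_mem_reachIn hτ hc hs))
  rintro x ⟨⟨d, hd⟩, hsx⟩
  by_cases hdL : d ∈ Q.losers τ
  · exact ⟨d, Or.inr hdL, hd⟩
  · exact ⟨d, Or.inl ⟨n + 1, c, hc, hdL, s, hs, x, hd, hsx⟩, hd⟩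

end Competitor

end Exchange

section Doubled

variable {A O : Type*} {adj : A → O → Prop} {pref : A → O → O → Prop} {Mat : Matroid O}

abbrev doubleAdj (adj : A → O → Prop) : A → Bool × O → Prop := fun a s => adj a s.2

abbrev doubleMatroid (Mat : Matroid O) : Matroid (Bool × O) := Matroid.sum' fun _ => Mat

noncomputable abbrev doubleUtil (pref : A → O → O → Prop) :
    A → Option (Bool × O) → ℕ :=
  fun a x => util pref a (x.map Prod.snd)

noncomputable def competitorOf (pref : A → O → O → Prop) {N : A → Option O}
    (hN : IsConstrained adj Mat N) :
    Competitor (doubleAdj adj) (doubleMatroid Mat) (doubleUtil pref) where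
  slots c := {s | N c = some s.2}
  val c := util pref c (N c)
  adj_of_mem c s hs := hN.1.1 c s.2 hs
  mem_ground c s hs := by
    simp only [Matroid.sum'_ground_eq, Set.mem_iUnion, Set.mem_image]
    exact ⟨s.1, s.2, hN.2.subset_ground ⟨c, hs⟩, rfl⟩
  wt_eq c s hs := by rw [show N c = some s.2 from hs]; rfl

def component (τ : A → Option (Bool × O)) (i : Bool) : A → Option O :=
  fun a => (τ a).bind fun s => if s.1 = i then some s.2 else none

lemma component_eq_some_iff {τ : A → Option (Bool × O)} {i : Bool} {a : A} {o : O} :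
    component τ i a = some o ↔ τ a = some (i, o) := by
  rcases h : τ a with _ | ⟨j, x⟩ <;> simp [component, h]

lemma isConstrained_component {τ : A → Option (Bool × O)}
    (hτ : IsConstrained (doubleAdj adj) (doubleMatroid Mat) τ) (i : Bool) :
    IsConstrained adj Mat (component τ i) := by
  refine ⟨⟨fun a o h => hτ.1.1 a (i, o) (component_eq_some_iff.1 h), fun a a' o h h' =>
    hτ.1.2 a a' (i, o) (component_eq_some_iff.1 h) (component_eq_some_iff.1 h')⟩, ?_⟩
  have h := (Matroid.sum'_indep_iff.1 hτ.2) i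
  convert h using 1
  ext o
  simp [matchedObjs, component_eq_some_iff]

lemma max_util_component (τ : A → Option (Bool × O)) (a : A) :
    max (util pref a (component τ false a)) (util pref a (component τ true a)) =
      doubleUtil pref a (τ a) := by
  rcases h : τ a with _ | ⟨_ | _, o⟩ <;> simp [component, h, util, doubleUtil]

lemma setOf_forall_prefM_component [Finite O] (hpref : IsWeakRanking adj pref)
    {τ : A → Option (Bool × O)} (hτ : IsConstrained (doubleAdj adj) (doubleMatroid Mat) τ)
    {N : A → Option O} (hN : IsConstrained adj Mat N) :
    {a | ∀ M ∈ ({component τ false, component τ true} : Set (A → Option O)),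
      PrefM pref a N M} = (competitorOf pref hN).winners τ := by
  ext a
  simp only [Set.mem_insert_iff, Set.mem_singleton_iff, forall_eq_or_imp, forall_eq,
    Set.mem_ofPred_eq, Competitor.winners, competitorOf, ← max_util_component, max_lt_iff]
  rw [prefM_iff_util_lt hpref (hN.1.1 a) ((isConstrained_component hτ false).1.1 a),
    prefM_iff_util_lt hpref (hN.1.1 a) ((isConstrained_component hτ true).1.1 a)]

lemma setOf_exists_prefM_component [Finite O] (hpref : IsWeakRanking adj pref)
    {τ : A → Option (Bool × O)} (hτ : IsConstrained (doubleAdj adj) (doubleMatroid Mat) τ)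
    {N : A → Option O} (hN : IsConstrained adj Mat N) :
    {a | ∃ M ∈ ({component τ false, component τ true} : Set (A → Option O)),
      PrefM pref a M N} = (competitorOf pref hN).losers τ := by
  ext a
  simp only [Set.mem_insert_iff, Set.mem_singleton_iff, exists_eq_or_imp, exists_eq_left,
    Set.mem_ofPred_eq, Competitor.losers, competitorOf, ← max_util_component, lt_max_iff]
  rw [prefM_iff_util_lt hpref ((isConstrained_component hτ false).1.1 a) (hN.1.1 a),
    prefM_iff_util_lt hpref ((isConstrained_component hτ true).1.1 a) (hN.1.1 a)]

theorem ncard_winners_le_ncard_losers [Fintype A] [Finite O] {τ : A → Option (Bool × O)}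
    (hτ : IsMaxWeight (doubleAdj adj) (doubleMatroid Mat) (doubleUtil pref) τ)
    {N : A → Option O} (hN : IsConstrained adj Mat N) :
    ((competitorOf pref hN).winners τ).ncard ≤ ((competitorOf pref hN).losers τ).ncard := by
  set Q := competitorOf pref hN
  set R := Q.reach τ
  set NR := {o | ∃ c ∈ R, N c = some o}
  set K := {x | ∃ d ∈ R ∪ Q.losers τ, τ d = some x}
  have hslots : ⋃ c ∈ R, Q.slots c = Set.univ ×ˢ NR := by
    ext ⟨i, o⟩
    simp [Q, competitorOf, NR]
  have hNR : (doubleMatroid Mat).Indep (Set.univ ×ˢ NR) :=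
    Matroid.sum'_indep_iff.2 fun i => hN.2.subset fun o ⟨_, c, _, hc⟩ => ⟨c, hc⟩
  have hK : (doubleMatroid Mat).Indep K := hτ.1.2.subset fun x ⟨d, _, hd⟩ => ⟨d, hd⟩
  have hcount : (Set.univ ×ˢ NR).ncard ≤ K.ncard := hNR.ncard_le_ncard_of_subset_closure hK
    (hslots ▸ Q.biUnion_slots_reach_subset_closure hτ) (Set.toFinite K)
  have hRN : ∀ c ∈ R, N c ≠ none := fun c hc hNc => by
    have := Q.val_pos_of_mem_reach (fun a x => util_some_pos pref a x.2) hc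
    simp [Q, competitorOf, hNc, util] at this
  have hRNR : R.ncard ≤ NR.ncard := by
    refine Set.ncard_le_ncard_setOf_exists_eq_some hRN fun c hc c' _ h => ?_
    obtain ⟨o, ho⟩ := Option.ne_none_iff_exists'.1 (hRN c hc)
    exact hN.1.2 c c' o ho (h ▸ ho)
  have hKRL : K.ncard ≤ R.ncard + (Q.losers τ).ncard :=
    (Set.ncard_setOf_exists_eq_some_le τ _).trans (Set.ncard_union_le _ _)
  have hWR : (Q.winners τ).ncard ≤ R.ncard := Set.ncard_le_ncard fun c hc => ⟨0, hc⟩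
  rw [Set.ncard_prod, Set.ncard_univ, Nat.card_eq_fintype_card, Fintype.card_bool] at hcount
  omega

end Doubled

end ConstrainedMatching

theorem exists_popular_pair_of_weak_general
    {A O : Type*} [Fintype A] [Fintype O]
    (adj : A → O → Prop) (pref : A → O → O → Prop)
    (hpref : IsWeakRanking adj pref)
    (Mat : Matroid O) :
    ∃ Mset : Set (A → Option O),
      (∀ M ∈ Mset, IsConstrained adj Mat M) ∧ Mset.ncard ≤ 2 ∧
      Popular pref {M | IsConstrained adj Mat M} Mset := by
  open ConstrainedMatching in
  obtain ⟨τ, hτ⟩ := exists_isMaxWeight (doubleAdj adj) (doubleMatroid Mat) (doubleUtil pref)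
  refine ⟨{component τ false, component τ true}, ?_, ?_, fun N hN => ?_⟩
  · rintro M (rfl | rfl) <;> exact isConstrained_component hτ.1 _
  · exact (Set.ncard_insert_le _ _).trans (by rw [Set.ncard_singleton])
  · rw [phiOne, phiSet, setOf_forall_prefM_component hpref hτ.1 hN,
      setOf_exists_prefM_component hpref hτ.1 hN]
    exact ncard_winners_le_ncard_losers hτ hN

/-- In a matroid-constrained matching instance with weak rankings,
there exists a popular set of at most two `ℐ`-constrained matchings. -/
theorem exists_popular_pair_of_weak
    {A O : Type*} [Fintype A] [Fintype O]
    (adj : A → O → Prop) (pref : A → O → O → Prop)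
    (hpref : IsWeakRanking adj pref)
    (Mat : Matroid O) (hE : Mat.E = Set.univ) :
    ∃ Mset : Set (A → Option O),
      (∀ M ∈ Mset, IsConstrained adj Mat M) ∧ Mset.ncard ≤ 2 ∧
      Popular pref {M | IsConstrained adj Mat M} Mset :=
  exists_popular_pair_of_weak_general adj pref hpref Mat
end

section
/- Let ℐ be a matroid on the object set O, and let M, N be two ℐ-constrained matchings in a matching instance such that every agent is matched in both M and N and both M(A) and N(A) are bases of ℐ. Let C be a directed cycle in the exchange graph D_{N→M}, let A(C) be the set of agents on C, and let a' ∈ A(C). Then there exists A' ⊆ A(C) with a' ∈ A' such that the assignment M' defined by M'(a) = N(a) for all a ∈ A' and M'(a) = M(a) for all a ∈ A \ A' is an ℐ-constrained matching. -/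
open scoped Classical

/-- The fundamental circuit `C(X, o)` of `o` with respect to a basis `X`. -/
noncomputable def fundCircuit {O : Type*} (Mat : Matroid O) (X : Set O) (o : O) : Set O :=
  if o ∈ X then {o} else {x ∈ X | Mat.Indep (insert o (X \ {x}))}

/-- The exchange graph `D_{N→M}` on the agents, for fully matched matchings given by
`m n : A → O`: there is an arc `(a, b)` whenever `M(b) ∈ C(M(A), N(a))`. -/
def exchArc {A O : Type*} (Mat : Matroid O) (m n : A → O) (a b : A) : Prop :=
  m b ∈ fundCircuit Mat (Set.range m) (n a)

/-- A directed cycle in the digraph with arc relation `arc`, given as a nonempty list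
of pairwise distinct nodes with arcs between consecutive nodes and from the last node
back to the first. -/
def IsCycle {V : Type*} (arc : V → V → Prop) (c : List V) : Prop :=
  c ≠ [] ∧ c.Nodup ∧ c.Chain' arc ∧ ∀ x ∈ c.getLast?, ∀ y ∈ c.head?, arc x y

/-!
Take a shortest closed walk `a' = p₀ → p₁ → ⋯ → p_k = a'` in the exchange graph restricted
to the agents of `C`. Minimality rules out chords `p_i → p_l` with `l > i + 1`. Since for an
independent `X` we have `x ∈ C(X, y)` iff `y ∉ cl(X - x)`, writing `x_j = M(p_{j+1})` and
`y_j = N(p_j)` this says that `y_j ∉ cl(M(A) - x_j)` while `y_i ∈ cl(M(A) - x_j)` for `i < j`.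
Exchanging `x_j` for `y_j` in the order `j = 0, 1, …, k - 1` then preserves independence at
every step (serial exchange), and because the walk is closed the objects given up are exactly
`M(A')` for `A' = {p₀, …, p_{k-1}}`.
-/

open Set

theorem mem_fundCircuit_iff_of_indep {O : Type*} {M : Matroid O} {B : Set O} (hB : M.Indep B)
    {x y : O} :
    x ∈ fundCircuit M B y ↔ x ∈ B ∧ y ∈ M.E \ M.closure (B \ {x}) := by
  by_cases hyB : y ∈ B
  · simp only [fundCircuit, hyB, if_true, mem_singleton_iff]
    constructor
    · rintro rfl
      exact ⟨hyB, hB.subset_ground hyB, hB.notMem_closure_sdiff_of_mem hyB⟩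
    · rintro ⟨-, -, hy⟩
      by_contra hxy
      exact hy (M.subset_closure _ (sdiff_subset.trans hB.subset_ground) ⟨hyB, Ne.symm hxy⟩)
  · simp only [fundCircuit, hyB, if_false, mem_ofPred_eq]
    rw [(hB.subset sdiff_subset).insert_indep_iff_of_notMem (fun h => hyB h.1)]

namespace Matroid

variable {O : Type*} {M : Matroid O} {B : Set O}

theorem Indep.serial_exchange (hB : M.Indep B) {x y : ℕ → O} {k : ℕ}
    (hxB : ∀ j < k, x j ∈ B) (hy : ∀ j < k, y j ∈ M.E \ M.closure (B \ {x j}))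
    (hyx : ∀ i j, i < j → j < k → y i ∈ M.closure (B \ {x j})) :
    M.Indep ((B \ x '' Iio k) ∪ y '' Iio k) := by
  induction k with
  | zero => simpa using hB
  | succ k ih =>
    set F := (B \ x '' Iio k) ∪ y '' Iio k
    have hF : M.Indep F := ih (fun j hj => hxB j (by omega)) (fun j hj => hy j (by omega))
      (fun i j hij hj => hyx i j hij (by omega))
    have hFx : F \ {x k} ⊆ M.closure (B \ {x k}) := by
      rintro z ⟨hz | ⟨i, hi, rfl⟩, hzx⟩
      · exact M.subset_closure _ (sdiff_subset.trans hB.subset_ground) ⟨hz.1, hzx⟩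
      · exact hyx i k hi (by omega)
    have hins : M.Indep (insert (y k) (F \ {x k})) := by
      refine (hF.subset sdiff_subset).insert_indep_iff.2 (Or.inl ⟨(hy k k.lt_succ_self).1, ?_⟩)
      exact fun h => (hy k k.lt_succ_self).2 (M.closure_subset_closure_of_subset_closure hFx h)
    refine hins.subset ?_
    rw [Iio_add_one_eq_Iic, ← Iio_insert, image_insert_eq, image_insert_eq]
    rintro z (⟨hzB, hzx⟩ | rfl | ⟨i, hi, rfl⟩)
    · exact Or.inr ⟨Or.inl ⟨hzB, fun h => hzx (Or.inr h)⟩, fun h => hzx (Or.inl h)⟩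
    · exact Or.inl rfl
    · refine Or.inr ⟨Or.inr ⟨i, hi, rfl⟩, fun h => ?_⟩
      have hxk := hB.notMem_closure_sdiff_of_mem (hxB k k.lt_succ_self)
      exact hxk (h ▸ hyx i k hi k.lt_succ_self)

end Matroid

namespace Relation

variable {α : Type*} {r : α → α → Prop} {a b : α}

theorem TransGen.exists_walk (h : TransGen r a b) :
    ∃ k, ∃ p : ℕ → α, 0 < k ∧ p 0 = a ∧ p k = b ∧ ∀ i < k, r (p i) (p (i + 1)) := by
  induction h with
  | single hab => exact ⟨1, fun i => if i = 0 then a else _, one_pos, rfl, rfl, by simpa⟩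
  | @tail _ c _ hbc ih =>
    obtain ⟨k, p, hk, hp0, hpk, hp⟩ := ih
    refine ⟨k + 1, Function.update p (k + 1) c, k.succ_pos, ?_, by simp, fun i hi => ?_⟩
    · simpa [Function.update_of_ne (Nat.succ_ne_zero k).symm] using hp0
    · rcases Nat.lt_succ_iff_lt_or_eq.1 hi with hi | rfl
      · rw [Function.update_of_ne (by omega), Function.update_of_ne (by omega)]
        exact hp i hi
      · simpa [hpk] using hbc

theorem TransGen.exists_chordless_walk (h : TransGen r a b) :
    ∃ k, ∃ p : ℕ → α, 0 < k ∧ p 0 = a ∧ p k = b ∧ (∀ i < k, r (p i) (p (i + 1))) ∧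
      ∀ i l, i + 1 < l → l ≤ k → ¬ r (p i) (p l) := by
  classical
  have hex := h.exists_walk
  obtain ⟨p, hk, hp0, hpk, hp⟩ := Nat.find_spec hex
  refine ⟨Nat.find hex, p, hk, hp0, hpk, hp, fun i l hil hlk hr => ?_⟩
  set k := Nat.find hex
  -- the walk `p 0, …, p i, p l, …, p k` would be shorter
  refine Nat.find_min hex (m := k - (l - i - 1)) (by omega)
    ⟨fun j => if j ≤ i then p j else p (j + (l - i - 1)), by omega, by simpa using hp0, ?_, ?_⟩
  · simp only [show ¬ k - (l - i - 1) ≤ i by omega, if_false]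
    rwa [show k - (l - i - 1) + (l - i - 1) = k by omega]
  · intro j hj
    rcases lt_trichotomy j i with hji | rfl | hji
    · simpa [hji.le, Nat.succ_le_of_lt hji] using hp j (by omega)
    · simp only [le_refl, if_true, show ¬ j + 1 ≤ j by omega, if_false,
        show j + 1 + (l - j - 1) = l by omega]
      exact hr
    · simp only [show ¬ j ≤ i by omega, show ¬ j + 1 ≤ i by omega, if_false]
      simpa [add_right_comm] using hp (j + (l - i - 1)) (by omega)

end Relation

theorem IsCycle.transGen_self {V : Type*} {arc : V → V → Prop} {c : List V}
    (hc : IsCycle arc c) {a : V} (ha : a ∈ c) :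
    Relation.TransGen (fun x y => x ∈ c ∧ y ∈ c ∧ arc x y) a a := by
  obtain ⟨hne, -, hch, hlast⟩ := hc
  set r := fun x y => x ∈ c ∧ y ∈ c ∧ arc x y
  have hch' : c.IsChain r := List.IsChain.iff_mem.1 hch
  have from_head : Relation.ReflTransGen r (c.head hne) a :=
    hch'.induction (Relation.ReflTransGen r (c.head hne)) _ (fun _ _ hxy h => h.tail hxy)
      (fun _ => .refl) a ha
  have to_last : Relation.ReflTransGen r a (c.getLast hne) :=
    hch'.backwards_induction (Relation.ReflTransGen r · (c.getLast hne)) _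
      (fun _ _ hxy h => h.head hxy) (fun _ => .refl) a ha
  have wrap : r (c.getLast hne) (c.head hne) :=
    ⟨c.getLast_mem hne, c.head_mem hne, hlast _ (List.getLast?_eq_some_getLast hne ▸ rfl) _
      (List.head?_eq_some_head hne ▸ rfl)⟩
  exact (Relation.TransGen.tail' to_last wrap).trans_left from_head

theorem image_add_one_Iio_of_closed {α : Type*} {p : ℕ → α} {k : ℕ} (hk : 0 < k)
    (hpk : p k = p 0) : (fun j => p (j + 1)) '' Iio k = p '' Iio k := by
  ext z
  constructor
  · rintro ⟨j, hj, rfl⟩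
    rcases (Nat.succ_le_of_lt hj).lt_or_eq with h | h
    · exact ⟨j + 1, h, rfl⟩
    · exact ⟨0, hk, by simp only [Nat.succ_eq_add_one] at h; simp only [h, hpk]⟩
  · rintro ⟨j, hj, rfl⟩
    rcases Nat.eq_zero_or_pos j with rfl | hj0
    · exact ⟨k - 1, by simp only [mem_Iio]; omega, by simp only [Nat.sub_add_cancel hk, hpk]⟩
    · exact ⟨j - 1, by simp only [mem_Iio] at hj ⊢; omega,
        by simp only [Nat.sub_add_cancel hj0]⟩

section Matching

variable {A O : Type*} {adj : A → O → Prop} {m n : A → O}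

theorem matchedObjs_some (m : A → O) : matchedObjs (fun a => some (m a)) = range m := by
  ext; simp [matchedObjs]

theorem IsMatching.injective (h : IsMatching adj (fun a => some (m a))) : m.Injective :=
  fun a b hab => h.2 a b (m a) rfl (by rw [hab])

theorem isMatching_ite (hm : IsMatching adj (fun a => some (m a)))
    (hn : IsMatching adj (fun a => some (n a))) {S : Set A}
    (hcross : ∀ a ∈ S, ∀ b ∉ S, n a ≠ m b) :
    IsMatching adj (fun a => if a ∈ S then some (n a) else some (m a)) := by
  refine ⟨fun a o h => ?_, fun a b o ha hb => ?_⟩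
  · dsimp only at h
    split_ifs at h with haS
    · exact hn.1 a o h
    · exact hm.1 a o h
  · dsimp only at ha hb
    split_ifs at ha hb with haS hbS hbS <;> rw [← hb, Option.some_inj] at ha
    · exact hn.injective ha
    · exact absurd ha (hcross a haS b hbS)
    · exact absurd ha.symm (hcross b hbS a haS)
    · exact hm.injective ha

theorem matchedObjs_ite_subset (hm : m.Injective) (S : Set A) :
    matchedObjs (fun a => if a ∈ S then some (n a) else some (m a)) ⊆
      (range m \ m '' S) ∪ n '' S := by
  rintro o ⟨a, ha⟩
  dsimp only at ha
  split_ifs at ha with haS <;> rw [Option.some_inj] at ha <;> subst ha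
  · exact Or.inr ⟨a, haS, rfl⟩
  · exact Or.inl ⟨mem_range_self a, fun ⟨b, hbS, hba⟩ => haS (hm hba ▸ hbS)⟩

end Matching

section ExchangeGraph

variable {A O : Type*} {Mat : Matroid O} {m n : A → O}

theorem exchArc_iff (hB : Mat.Indep (range m)) {a b : A} :
    exchArc Mat m n a b ↔ n a ∈ Mat.E \ Mat.closure (range m \ {m b}) := by
  simp only [exchArc, mem_fundCircuit_iff_of_indep hB, mem_range_self, true_and]

theorem eq_of_exchArc_of_apply_eq (hB : Mat.Indep (range m)) (hm : m.Injective) {a b b' : A}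
    (hab : exchArc Mat m n a b) (h : n a = m b') : b' = b := by
  by_contra hne
  refine ((exchArc_iff hB).1 hab).2 (Mat.subset_closure _ (sdiff_subset.trans hB.subset_ground)
    (h ▸ ⟨mem_range_self b', fun hb => hne (hm hb)⟩))

end ExchangeGraph

theorem exchange_along_cycle_general
    {A O : Type*}
    (adj : A → O → Prop)
    (Mat : Matroid O)
    (m n : A → O)
    (hm : IsConstrained adj Mat (fun a => some (m a)))
    (hn : IsConstrained adj Mat (fun a => some (n a)))
    (c : List A) (hc : IsCycle (exchArc Mat m n) c)
    (a' : A) (ha' : a' ∈ c) :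
    ∃ A' : Set A, A' ⊆ {a : A | a ∈ c} ∧ a' ∈ A' ∧
      IsConstrained adj Mat (fun a => if a ∈ A' then some (n a) else some (m a)) := by
  have hB : Mat.Indep (range m) := matchedObjs_some m ▸ hm.2
  have hnE : ∀ a, n a ∈ Mat.E := fun a => hn.2.subset_ground (by simp [matchedObjs])
  obtain ⟨k, p, hk, hp0, hpk, hstep, hchord⟩ := (hc.transGen_self ha').exists_chordless_walk
  have hshift := image_add_one_Iio_of_closed hk (hpk.trans hp0.symm)
  have hx : (fun j => m (p (j + 1))) '' Iio k = m '' (p '' Iio k) := by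
    rw [← hshift, image_image]
  have hy : (fun j => n (p j)) '' Iio k = n '' (p '' Iio k) := (image_image _ _ _).symm
  refine ⟨p '' Iio k, ?_, ⟨0, hk, hp0⟩, isMatching_ite hm.1 hn.1 ?_, ?_⟩
  · rintro _ ⟨i, hi, rfl⟩
    exact (hstep i hi).1
  · rintro _ ⟨i, hi, rfl⟩ b hb h
    have hb_next := eq_of_exchArc_of_apply_eq hB hm.1.injective (hstep i hi).2.2 h
    exact hb (hb_next ▸ hshift ▸ ⟨i, hi, rfl⟩)
  · have hexch := hB.serial_exchange (x := fun j => m (p (j + 1))) (y := fun j => n (p j))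
      (fun j _ => mem_range_self _) (fun j hj => (exchArc_iff hB).1 (hstep j hj).2.2)
      (fun i j hij hj => by_contra fun h => hchord i (j + 1) (by omega) (by omega)
        ⟨(hstep i (by omega)).1, (hstep j hj).2.1, (exchArc_iff hB).2 ⟨hnE _, h⟩⟩)
    rw [hx, hy] at hexch
    exact hexch.subset (matchedObjs_ite_subset hm.1.injective _)

/-- Given two everywhere-matched `ℐ`-constrained matchings `m`, `n`
whose matched object sets are bases, and a directed cycle `c` in the exchange graph
`D_{N→M}` through `a'`, there is a subset `A'` of the agents on `c` containing `a'`
such that reassigning the agents of `A'` to their objects under `n` yields an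
`ℐ`-constrained matching. -/
theorem exchange_along_cycle
    {A O : Type*} [Fintype A] [Fintype O]
    (adj : A → O → Prop)
    (Mat : Matroid O) (hE : Mat.E = Set.univ)
    (m n : A → O)
    (hm : IsConstrained adj Mat (fun a => some (m a)))
    (hn : IsConstrained adj Mat (fun a => some (n a)))
    (hmB : Mat.IsBase (Set.range m)) (hnB : Mat.IsBase (Set.range n))
    (c : List A) (hc : IsCycle (exchArc Mat m n) c)
    (a' : A) (ha' : a' ∈ c) :
    ∃ A' : Set A, A' ⊆ {a : A | a ∈ c} ∧ a' ∈ A' ∧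
      IsConstrained adj Mat (fun a => if a ∈ A' then some (n a) else some (m a)) :=
  exchange_along_cycle_general adj Mat m n hm hn c hc a' ha'
end

section
/- Let ℐ be a matroid on the object set O, and let M, N be two ℐ-constrained matchings in a matching instance such that every agent is matched in both M and N and both M(A) and N(A) are bases of ℐ. Let P₁, …, P_ℓ be node-disjoint directed paths in the exchange graph D_{N→M}, where Pᵢ is a path from aᵢ to bᵢ, and assume that there is no arc of D_{N→M} from a node of Pᵢ to a node of Pⱼ for any i > j. Then there exists A' ⊆ ⋃ᵢ A(Pᵢ) with a₁, …, a_ℓ, b₁, …, b_ℓ ∈ A' such that the assignment M' defined by M'(a) = M(a) for a ∈ A \ A', M'(a) = N(a) for a ∈ A' \ {b₁, …, b_ℓ}, and M'(bᵢ) = ∅ (each bᵢ unmatched) for i ∈ [ℓ], is an ℐ-constrained matching. -/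
/-!
Each path is first shortcut greedily, so that no agent has an arc to an agent more than one step
ahead of it on its path; `A'` is the set of agents on the shortcut paths. The objects of the new
matching together with the objects `M(aᵢ)` number at most `|A| = rank`, so it suffices that they
span. List the arcs `(a, b)` of the shortcut paths, last path first and each path from its start.
Then `M(b)` lies in the fundamental circuit of `N(a)`, and since there are no shortcuts and no arcs
to earlier paths, every other element of that circuit is `N(a)`, an object of the set, or `M(b')`
for an arc `(a', b')` listed before. Hence each `M(b)` is spanned in turn, and so is the base
`M(A)`.
-/

open scoped Classical

/-- A directed path from `s` to `t`, given as a nonempty list of pairwise distinct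
nodes with arcs between consecutive nodes, starting at `s` and ending at `t`. -/
def IsPath {V : Type*} (arc : V → V → Prop) (p : List V) (s t : V) : Prop :=
  p ≠ [] ∧ p.Nodup ∧ p.Chain' arc ∧ p.head? = some s ∧ p.getLast? = some t

section Lists

variable {α : Type*}

namespace List

lemma map_fst_consecutivePairs : ∀ l : List α, (consecutivePairs l).map Prod.fst = l.dropLast
  | [] | [_] => rfl
  | a :: b :: l => by
    simp [consecutivePairs, ← map_fst_consecutivePairs (b :: l)]

lemma map_snd_consecutivePairs (l : List α) : (consecutivePairs l).map Prod.snd = l.tail :=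
  map_snd_zip (by simp)

lemma IsChain.rel_of_mem_consecutivePairs {r : α → α → Prop} :
    ∀ {l : List α}, l.IsChain r → ∀ e ∈ consecutivePairs l, r e.1 e.2
  | [], _, _, he | [_], _, _, he => by simp [consecutivePairs] at he
  | a :: b :: l, hl, e, he => by
    rw [isChain_cons_cons] at hl
    rcases mem_cons.1 he with rfl | he
    · exact hl.1
    · exact hl.2.rel_of_mem_consecutivePairs e he

lemma exists_cons_suffix_forall_not {p : α → Prop} :
    ∀ {l : List α}, (∃ z ∈ l, p z) → ∃ u rest, u :: rest <:+ l ∧ p u ∧ ∀ z ∈ rest, ¬ p z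
  | [], h => by simp at h
  | a :: l, h => by
    by_cases hl : ∃ z ∈ l, p z
    · obtain ⟨u, rest, hsuf, hu, hrest⟩ := exists_cons_suffix_forall_not hl
      exact ⟨u, rest, hsuf.trans (suffix_cons a l), hu, hrest⟩
    · push Not at hl
      obtain ⟨z, hz, hpz⟩ := h
      rcases mem_cons.1 hz with rfl | hz
      · exact ⟨z, l, suffix_rfl, hpz, hl⟩
      · exact absurd hpz (hl z hz)

end List

/-- No node has an arc to a node more than one step ahead of it on `l`. -/
def IsShortcutFree (r : α → α → Prop) (l : List α) : Prop :=
  l.consecutivePairs.Pairwise fun e f => ¬ r e.1 f.2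

/-- Greedy shortcutting: jump from each node to the last later node it has an arc to. -/
theorem List.IsChain.exists_sublist_isShortcutFree {r : α → α → Prop} :
    ∀ {l : List α}, l.IsChain r → ∃ w : List α, w.Sublist l ∧ w.head? = l.head? ∧
      w.getLast? = l.getLast? ∧ w.IsChain r ∧ IsShortcutFree r w
  | [], _ => ⟨[], .slnil, rfl, rfl, .nil, .nil⟩
  | [a], _ => ⟨[a], .refl _, rfl, rfl, .singleton a, .nil⟩
  | v :: b :: l, hl => by
    rw [List.isChain_cons_cons] at hl
    obtain ⟨u, rest, hsuf, hvu, hrest⟩ :=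
      List.exists_cons_suffix_forall_not (p := r v) ⟨b, List.mem_cons_self, hl.1⟩
    have : rest.length < l.length + 1 := by simpa using hsuf.length_le
    obtain ⟨w, hw, hhead, hlast, hchain, hsc⟩ := (hl.2.suffix hsuf).exists_sublist_isShortcutFree
    obtain ⟨w', rfl⟩ := List.head?_eq_some_iff.1 hhead
    refine ⟨v :: u :: w', (hw.trans hsuf.sublist).cons_cons v, rfl, ?_,
      List.isChain_cons_cons.2 ⟨hvu, hchain⟩, ?_⟩
    · obtain ⟨pre, hpre⟩ := hsuf
      rw [List.getLast?_cons_cons, hlast, List.getLast?_cons_cons, ← hpre,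
        List.getLast?_append_of_ne_nil _ (List.cons_ne_nil _ _)]
    · refine List.Pairwise.cons (fun f hf => hrest f.2 ?_) hsc
      exact (List.cons_sublist_cons.1 hw).subset (List.of_mem_zip hf).2
termination_by l => l.length

lemma pairwise_flatMap_consecutivePairs {r : α → α → Prop} {ℓ : ℕ} {w : Fin ℓ → List α}
    (hsc : ∀ i, IsShortcutFree r (w i))
    (hback : ∀ i j, j < i → ∀ x ∈ w i, ∀ y ∈ w j, ¬ r x y) :
    ((List.finRange ℓ).reverse.flatMap fun i => (w i).consecutivePairs).Pairwise
      fun e f => ¬ r e.1 f.2 := by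
  rw [List.pairwise_flatMap, List.pairwise_reverse]
  refine ⟨fun i _ => hsc i, (List.pairwise_lt_finRange ℓ).imp fun hij e he f hf => ?_⟩
  exact hback _ _ hij e.1 (List.of_mem_zip he).1 f.2
    (List.mem_of_mem_tail (List.of_mem_zip hf).2)

end Lists

namespace IsPath

variable {α : Type*} {r : α → α → Prop} {l : List α} {s t a : α}

lemma isChain (h : IsPath r l s t) : l.IsChain r :=
  h.2.2.1

lemma head_mem (h : IsPath r l s t) : s ∈ l :=
  List.mem_of_mem_head? h.2.2.2.1

lemma getLast_mem (h : IsPath r l s t) : t ∈ l :=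
  List.mem_of_mem_getLast? h.2.2.2.2

lemma mem_tail (h : IsPath r l s t) (ha : a ∈ l) (has : a ≠ s) : a ∈ l.tail := by
  obtain ⟨l', rfl⟩ := List.head?_eq_some_iff.1 h.2.2.2.1
  exact (List.mem_cons.1 ha).resolve_left has

lemma mem_dropLast_iff (h : IsPath r l s t) (ha : a ∈ l) : a ∈ l.dropLast ↔ a ≠ t := by
  obtain ⟨l', rfl⟩ := List.getLast?_eq_some_iff.1 h.2.2.2.2
  have hnd := List.nodup_append.1 h.2.1
  rw [List.dropLast_concat]
  refine ⟨fun ha' => hnd.2.2 a ha' t (List.mem_singleton_self t), fun hat => ?_⟩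
  simpa [hat] using ha

lemma exists_sublist_isShortcutFree (h : IsPath r l s t) :
    ∃ w : List α, w.Sublist l ∧ IsPath r w s t ∧ IsShortcutFree r w := by
  obtain ⟨-, hnd, hchain, hs, ht⟩ := h
  obtain ⟨w, hw, hhead, hlast, hwchain, hsc⟩ := hchain.exists_sublist_isShortcutFree
  refine ⟨w, hw, ⟨?_, hnd.sublist hw, hwchain, hhead.trans hs, hlast.trans ht⟩, hsc⟩
  rintro rfl
  simp [← hhead] at hs

end IsPath

lemma fundCircuit_subset_insert {α : Type*} (M : Matroid α) (X : Set α) (y : α) :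
    fundCircuit M X y ⊆ insert y X := by
  unfold fundCircuit
  split_ifs
  · simp
  · exact Set.sep_subset _ _ |>.trans (Set.subset_insert _ _)

namespace Matroid

variable {α : Type*} {M : Matroid α} {X Z : Set α} {x y : α}

lemma IsBase.fundCircuit_eq_insert (hX : M.IsBase X) (hy : y ∈ M.E) :
    M.fundCircuit y X = insert y (_root_.fundCircuit M X y) := by
  by_cases hyX : y ∈ X
  · simp [_root_.fundCircuit, hyX, fundCircuit_eq_of_mem hyX]
  ext x
  rw [hX.indep.mem_fundCircuit_iff (by rwa [hX.closure_eq]) hyX]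
  obtain rfl | hxy := eq_or_ne x y
  · simp [hX.indep.sdiff]
  · simp only [Set.mem_insert_iff, hxy, false_or, _root_.fundCircuit, hyX, if_false,
      Set.mem_ofPred_eq, Set.insert_sdiff_singleton_comm hxy.symm]
    refine ⟨fun hI => ⟨by_contra fun hxX => ?_, hI⟩, And.right⟩
    rw [Set.sdiff_singleton_eq_self (by simp [hxy, hxX])] at hI
    exact (hX.insert_dep ⟨hy, hyX⟩).not_indep hI

lemma IsBase.mem_closure_of_mem_fundCircuit (hX : M.IsBase X) (hy : y ∈ M.E)
    (hx : x ∈ _root_.fundCircuit M X y) :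
    x ∈ M.closure (insert y (_root_.fundCircuit M X y \ {x})) := by
  obtain rfl | hxy := eq_or_ne x y
  · exact M.mem_closure_of_mem' (Set.mem_insert x _)
  have hyX : y ∉ X := fun hyX => hxy (by simpa [_root_.fundCircuit, hyX] using hx)
  have hC := hX.fundCircuit_isCircuit hy hyX
  rw [hX.fundCircuit_eq_insert hy] at hC
  have := hC.mem_closure_sdiff_singleton_of_mem (Set.mem_insert_of_mem y hx)
  rwa [← Set.insert_sdiff_singleton_comm hxy.symm] at this

lemma IsBase.subset_closure_of_pairwise_not_mem_fundCircuit (hX : M.IsBase X) (hZ : Z ⊆ M.E) :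
    ∀ L : List (α × α), (∀ p ∈ L, p.2 ∈ _root_.fundCircuit M X p.1) →
      L.Pairwise (fun p q => q.2 ∉ _root_.fundCircuit M X p.1) → (∀ p ∈ L, p.1 ∈ Z) →
      (∀ x ∈ X, (∀ p ∈ L, x ≠ p.2) → x ∈ Z) → X ⊆ M.closure Z := by
  intro L
  induction L generalizing Z with
  | nil =>
    intro _ _ _ hXZ x hx
    exact M.mem_closure_of_mem' (hXZ x hx (by simp)) (hX.subset_ground hx)
  | cons p L ih =>
    intro hL htri hsrc hXZ
    rw [List.pairwise_cons] at htri
    have hp1 : p.1 ∈ Z := hsrc p List.mem_cons_self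
    have hp2 : p.2 ∈ M.closure Z := by
      refine M.closure_subset_closure ?_
        (hX.mem_closure_of_mem_fundCircuit (hZ hp1) (hL p List.mem_cons_self))
      refine Set.insert_subset hp1 fun z ⟨hz, hzp⟩ => ?_
      rcases _root_.fundCircuit_subset_insert M X p.1 hz with rfl | hzX
      · exact hp1
      refine hXZ z hzX fun q hq => ?_
      rcases List.mem_cons.1 hq with rfl | hq
      · exact hzp
      · rintro rfl
        exact htri.1 q hq hz
    rw [← M.closure_insert_eq_of_mem_closure hp2]
    refine ih (Set.insert_subset (M.closure_subset_ground Z hp2) hZ)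
      (fun q hq => hL q (.tail p hq)) htri.2 (fun q hq => .inr (hsrc q (.tail p hq)))
      fun x hx hxL => ?_
    by_cases hxp : x = p.2
    · exact .inl hxp
    · refine .inr (hXZ x hx fun q hq => ?_)
      rcases List.mem_cons.1 hq with rfl | hq
      · exact hxp
      · exact hxL q hq

lemma IsBase.indep_of_subset_closure_of_ncard_le {B S : Set α} (hB : M.IsBase B)
    (hBS : B ⊆ M.closure S) (hS : S ⊆ M.E) (hSfin : S.Finite) (hcard : S.ncard ≤ B.ncard) :
    M.Indep S := by
  have hspan : M.Spanning S := by
    rw [spanning_iff_ground_subset_closure hS, ← hB.closure_eq]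
    exact M.closure_subset_closure_of_subset_closure hBS
  obtain ⟨B', hB', hB'S⟩ := hspan.exists_isBase_subset
  have hB'card := hB'.ncard_eq_ncard_of_isBase hB
  exact Set.eq_of_subset_of_ncard_le hB'S (by omega) hSfin ▸ hB'.indep

end Matroid

section ExchangeGraph

open Function Set

variable {A O : Type*} {adj : A → O → Prop} {Mat : Matroid O} {m n : A → O}

lemma IsMatching.injective_s11 {f : A → O} (hf : IsMatching adj fun a => some (f a)) :
    Injective f :=
  fun a b hab => hf.2 a b (f b) (congrArg some hab) rfl

lemma isConstrained_piecewise (hm : IsConstrained adj Mat fun a => some (m a))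
    (hn : IsConstrained adj Mat fun a => some (n a)) {A' : Set A} {T : A → Prop}
    [DecidablePred T] (hnm : ∀ a ∈ A', ¬ T a → ∀ b ∉ A', n a ≠ m b)
    (hind : Mat.Indep (n '' (A' \ {x | T x}) ∪ m '' A'ᶜ)) :
    IsConstrained adj Mat
      fun x => if T x then none else if x ∈ A' then some (n x) else some (m x) := by
  have hm_inj := hm.1.injective_s11
  have hn_inj := hn.1.injective_s11
  refine ⟨⟨fun a o ha => ?_, fun a a' o ha ha' => ?_⟩, hind.subset ?_⟩
  · dsimp only at ha
    split_ifs at ha <;> cases ha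
    exacts [hn.1.1 a _ rfl, hm.1.1 a _ rfl]
  · dsimp only at ha ha'
    split_ifs at ha ha' with hT hA hT' hA' hT' hA' <;>
      simp only [Option.some.injEq] at ha ha' <;> subst ha'
    exacts [hn_inj ha, (hnm a hA hT a' hA' ha).elim, (hnm a' hA' hT' a hA ha.symm).elim,
      hm_inj ha]
  · rintro o ⟨a, ha⟩
    dsimp only at ha
    split_ifs at ha with hT hA <;> cases ha
    exacts [.inl ⟨a, ⟨hA, hT⟩, rfl⟩, .inr ⟨a, hA, rfl⟩]

lemma exchArc_eq_of_apply_eq (hm : Injective m) {a b c : A} (hab : n a = m b)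
    (hac : exchArc Mat m n a c) : c = b :=
  hm (by simpa [exchArc, fundCircuit, hab] using hac)

lemma mem_of_apply_eq_of_mem_dropLast (hm : Injective m) {l : List A}
    (hl : l.IsChain (exchArc Mat m n)) {a b : A} (ha : a ∈ l.dropLast) (hab : n a = m b) :
    b ∈ l := by
  rw [← List.map_fst_consecutivePairs, List.mem_map] at ha
  obtain ⟨e, he, rfl⟩ := ha
  rw [← exchArc_eq_of_apply_eq hm hab (hl.rel_of_mem_consecutivePairs e he)]
  exact List.mem_of_mem_tail (List.of_mem_zip he).2

variable {ℓ : ℕ} {w : Fin ℓ → List A} {sa tb : Fin ℓ → A}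

lemma ne_end_of_mem_dropLast {r : A → A → Prop} (hw : ∀ i, IsPath r (w i) (sa i) (tb i))
    (hdisj : ∀ i j, i ≠ j → ∀ x ∈ w i, x ∉ w j) {i : Fin ℓ} {a : A}
    (ha : a ∈ (w i).dropLast) (j : Fin ℓ) : a ≠ tb j := by
  rintro rfl
  obtain rfl | hij := eq_or_ne i j
  · exact ((hw i).mem_dropLast_iff (List.dropLast_subset _ ha)).1 ha rfl
  · exact hdisj i j hij _ (List.dropLast_subset _ ha) (hw j).getLast_mem

lemma range_subset_closure_of_paths (hmB : Mat.IsBase (range m))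
    (hw : ∀ i, IsPath (exchArc Mat m n) (w i) (sa i) (tb i))
    (hsc : ∀ i, IsShortcutFree (exchArc Mat m n) (w i))
    (hback : ∀ i j, j < i → ∀ x ∈ w i, ∀ y ∈ w j, ¬ exchArc Mat m n x y)
    {Z : Set O} (hZ : Z ⊆ Mat.E) (hsrc : ∀ i, ∀ a ∈ (w i).dropLast, n a ∈ Z)
    (hoff : ∀ a, (∀ i, a ∉ w i) → m a ∈ Z) (hstart : ∀ i, m (sa i) ∈ Z) :
    range m ⊆ Mat.closure Z := by
  set L := (List.finRange ℓ).reverse.flatMap fun i => (w i).consecutivePairs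
  have hL : ∀ e ∈ L, ∃ i, e ∈ (w i).consecutivePairs := by simp [L]
  refine hmB.subset_closure_of_pairwise_not_mem_fundCircuit hZ (L.map fun e => (n e.1, m e.2))
    ?_ ?_ ?_ ?_
  · simp only [List.mem_map]
    rintro _ ⟨e, he, rfl⟩
    obtain ⟨i, hei⟩ := hL e he
    exact (hw i).isChain.rel_of_mem_consecutivePairs e hei
  · rw [List.pairwise_map]
    exact pairwise_flatMap_consecutivePairs hsc hback
  · simp only [List.mem_map]
    rintro _ ⟨e, he, rfl⟩
    obtain ⟨i, hei⟩ := hL e he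
    exact hsrc i e.1 (List.map_fst_consecutivePairs (w i) ▸ List.mem_map_of_mem hei)
  · rintro _ ⟨a, rfl⟩ hnt
    by_cases ha : ∃ i, a ∈ w i
    · obtain ⟨i, ha⟩ := ha
      by_cases has : a = sa i
      · exact has ▸ hstart i
      obtain ⟨e, he, rfl⟩ : ∃ e ∈ (w i).consecutivePairs, e.2 = a := by
        rw [← List.mem_map, List.map_snd_consecutivePairs]
        exact (hw i).mem_tail ha has
      exact (hnt _ (List.mem_map_of_mem (List.mem_flatMap.2 ⟨i, by simp, he⟩)) rfl).elim
    · push Not at ha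
      exact hoff a ha

lemma indep_image_of_paths [Finite A] (hE : Mat.E = univ) (hm : Injective m)
    (hmB : Mat.IsBase (range m)) (hw : ∀ i, IsPath (exchArc Mat m n) (w i) (sa i) (tb i))
    (hsc : ∀ i, IsShortcutFree (exchArc Mat m n) (w i))
    (hdisj : ∀ i j, i ≠ j → ∀ x ∈ w i, x ∉ w j)
    (hback : ∀ i j, j < i → ∀ x ∈ w i, ∀ y ∈ w j, ¬ exchArc Mat m n x y) :
    Mat.Indep (n '' ({x | ∃ i, x ∈ w i} \ {x | ∃ i, x = tb i}) ∪ m '' {x | ∃ i, x ∈ w i}ᶜ) := by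
  set A' := {x | ∃ i, x ∈ w i}
  have htb : Injective tb := fun i j hij => by_contra fun hne =>
    hdisj i j hne _ (hw i).getLast_mem (hij ▸ (hw j).getLast_mem)
  -- The objects, together with the `m (sa i)`, are the range of one map on `A`, hence at most
  -- `rank` many: `h` sends each end `tb i` to `m (sa i)`.
  set h := extend tb (m ∘ sa) fun x => if x ∈ A' then n x else m x
  have hh : ∀ x, (∀ i, x ≠ tb i) → h x = if x ∈ A' then n x else m x :=
    fun x hx => extend_apply' _ _ _ fun ⟨i, hi⟩ => hx i hi.symm
  have hsub : n '' (A' \ {x | ∃ i, x = tb i}) ∪ m '' A'ᶜ ⊆ range h := by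
    rintro _ (⟨a, ⟨hA, hT⟩, rfl⟩ | ⟨a, hA, rfl⟩)
    · exact ⟨a, by rw [hh a fun i hi => hT ⟨i, hi⟩, if_pos hA]⟩
    · exact ⟨a, by rw [hh a fun i hi => hA ⟨i, hi ▸ (hw i).getLast_mem⟩, if_neg hA]⟩
  have hspan : range m ⊆ Mat.closure (range h) := by
    refine range_subset_closure_of_paths hmB hw hsc hback (hE ▸ subset_univ _)
      (fun i a ha => ⟨a, ?_⟩) (fun a ha => ⟨a, ?_⟩) fun i => ⟨tb i, htb.extend_apply _ _ i⟩
    · rw [hh a (ne_end_of_mem_dropLast hw hdisj ha), if_pos ⟨i, List.dropLast_subset _ ha⟩]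
    · rw [hh a fun i hi => ha i (hi ▸ (hw i).getLast_mem), if_neg fun ⟨i, hi⟩ => ha i hi]
  have hcard : (range h).ncard ≤ (range m).ncard := by
    rw [ncard_range_of_injective hm, ← image_univ, ← ncard_univ]
    exact ncard_image_le finite_univ
  exact (hmB.indep_of_subset_closure_of_ncard_le hspan (hE ▸ subset_univ _) (finite_range h)
    hcard).subset hsub

end ExchangeGraph

theorem exchange_along_paths_general
    {A O : Type*} [Fintype A]
    (adj : A → O → Prop)
    (Mat : Matroid O) (hE : Mat.E = Set.univ)
    (m n : A → O)
    (hm : IsConstrained adj Mat (fun a => some (m a)))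
    (hn : IsConstrained adj Mat (fun a => some (n a)))
    (hmB : Mat.IsBase (Set.range m))
    (ℓ : ℕ) (P : Fin ℓ → List A) (sa tb : Fin ℓ → A)
    (hP : ∀ i, IsPath (exchArc Mat m n) (P i) (sa i) (tb i))
    (hdisj : ∀ i j, i ≠ j → ∀ x, x ∈ P i → x ∉ P j)
    (harc : ∀ i j : Fin ℓ, j < i → ∀ x ∈ P i, ∀ y ∈ P j, ¬ exchArc Mat m n x y) :
    ∃ A' : Set A, A' ⊆ {x : A | ∃ i, x ∈ P i} ∧
      (∀ i, sa i ∈ A' ∧ tb i ∈ A') ∧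
      IsConstrained adj Mat
        (fun x => if ∃ i, x = tb i then none
          else if x ∈ A' then some (n x) else some (m x)) := by
  choose w hwP hw hsc using fun i => (hP i).exists_sublist_isShortcutFree
  have hwP : ∀ i, ∀ x ∈ w i, x ∈ P i := fun i x hx => (hwP i).subset hx
  have hm_inj := hm.1.injective_s11
  refine ⟨{x | ∃ i, x ∈ w i}, fun x ⟨i, hx⟩ => ⟨i, hwP i x hx⟩,
    fun i => ⟨⟨i, (hw i).head_mem⟩, ⟨i, (hw i).getLast_mem⟩⟩, isConstrained_piecewise hm hn ?_
    (indep_image_of_paths hE hm_inj hmB hw hsc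
      (fun i j hij x hx hx' => hdisj i j hij x (hwP i x hx) (hwP j x hx'))
      (fun i j hji x hx y hy => harc i j hji x (hwP i x hx) y (hwP j y hy)))⟩
  rintro a ⟨i, ha⟩ haT b hb hab
  have ha' : a ∈ (w i).dropLast := ((hw i).mem_dropLast_iff ha).2 fun h => haT ⟨i, h⟩
  exact hb ⟨i, mem_of_apply_eq_of_mem_dropLast hm_inj (hw i).isChain ha' hab⟩

/-- Given two everywhere-matched `ℐ`-constrained matchings `m`, `n`
whose matched object sets are bases, and node-disjoint directed paths `P i` from `sa i`
to `tb i` in the exchange graph with no arc from a later path to an earlier one, there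
is a subset `A'` of the agents on the paths containing all endpoints, such that
reassigning the agents of `A'` other than the endpoints `tb i` to their objects under
`n` and leaving all `tb i` unmatched yields an `ℐ`-constrained matching. -/
theorem exchange_along_paths
    {A O : Type*} [Fintype A] [Fintype O]
    (adj : A → O → Prop)
    (Mat : Matroid O) (hE : Mat.E = Set.univ)
    (m n : A → O)
    (hm : IsConstrained adj Mat (fun a => some (m a)))
    (hn : IsConstrained adj Mat (fun a => some (n a)))
    (hmB : Mat.IsBase (Set.range m)) (hnB : Mat.IsBase (Set.range n))
    (ℓ : ℕ) (P : Fin ℓ → List A) (sa tb : Fin ℓ → A)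
    (hP : ∀ i, IsPath (exchArc Mat m n) (P i) (sa i) (tb i))
    (hdisj : ∀ i j, i ≠ j → ∀ x, x ∈ P i → x ∉ P j)
    (harc : ∀ i j : Fin ℓ, j < i → ∀ x ∈ P i, ∀ y ∈ P j, ¬ exchArc Mat m n x y) :
    ∃ A' : Set A, A' ⊆ {x : A | ∃ i, x ∈ P i} ∧
      (∀ i, sa i ∈ A' ∧ tb i ∈ A') ∧
      IsConstrained adj Mat
        (fun x => if ∃ i, x = tb i then none
          else if x ∈ A' then some (n x) else some (m x)) :=
  exchange_along_paths_general adj Mat hE m n hm hn hmB ℓ P sa tb hP hdisj harc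
end
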